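/- arXiv:2105.12484 — 7 statements merged into one kernel-verified Lean document; each statement's English description precedes it below -/
import Mathlib

section
/- For every positive integer k, every tournament on n vertices contains the k-th power of a directed path on at least k·n/2^{4k+6} vertices. -/
open Finset

attribute [local instance] Classical.propDecidable

/-- `E` is a tournament relation: irreflexive, and for distinct vertices exactly one
direction is present. -/
def IsTournament {V : Type} (E : V → V → Prop) : Prop :=
  (∀ v, ¬ E v v) ∧ ∀ u v : V, u ≠ v → (E u v ↔ ¬ E v u)

/-- `x : Fin m → V` is the `k`-th power of a directed path: distinct vertices with
`x i → x j` whenever `i < j ≤ i + k`. -/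
def IsPathPower {V : Type} (E : V → V → Prop) (k m : ℕ) (x : Fin m → V) : Prop :=
  Function.Injective x ∧
    ∀ i j : Fin m, (i : ℕ) < (j : ℕ) → (j : ℕ) ≤ (i : ℕ) + k → E (x i) (x j)

/-- `x : Fin m → V` is the `k`-th power of a directed cycle of length `m`: distinct
vertices with an edge from `x i` to each of its `k` cyclic successors. -/
def IsCyclePower {V : Type} (E : V → V → Prop) (k m : ℕ) (x : Fin m → V) : Prop :=
  Function.Injective x ∧
    ∀ (i : Fin m) (d : ℕ), 1 ≤ d → d ≤ k →
      E (x i) (x ⟨((i : ℕ) + d) % m, Nat.mod_lt _ i.pos⟩)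

/-- The set `S` induces a transitive subtournament: its elements can be linearly
ordered so that every edge inside `S` goes from smaller to larger. -/
def IsTransitiveOn {V : Type} (E : V → V → Prop) (S : Finset V) : Prop :=
  ∃ f : V → ℕ, Set.InjOn f ↑S ∧ ∀ u ∈ S, ∀ v ∈ S, E u v → f u < f v

/-- `X ⇒ Y`: an edge from every vertex of `X` to every vertex of `Y`. -/
def Dominates {V : Type} (E : V → V → Prop) (X Y : Finset V) : Prop :=
  ∀ x ∈ X, ∀ y ∈ Y, E x y

/-- Number of forward edges of `E` with respect to the ordering `σ`. -/
noncomputable def fwdCount {V : Type} [Fintype V] (E : V → V → Prop)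
    (σ : V ≃ Fin (Fintype.card V)) : ℕ :=
  (Finset.univ.filter fun p : V × V => E p.1 p.2 ∧ σ p.1 < σ p.2).card

/-- Number of backward edges of `E` with respect to the ordering `σ`. -/
noncomputable def backCount {V : Type} [Fintype V] (E : V → V → Prop)
    (σ : V ≃ Fin (Fintype.card V)) : ℕ :=
  (Finset.univ.filter fun p : V × V => E p.1 p.2 ∧ σ p.2 < σ p.1).card

/-- A median ordering: a vertex ordering maximizing the number of forward edges. -/
def IsMedianOrder {V : Type} [Fintype V] (E : V → V → Prop)
    (τ : V ≃ Fin (Fintype.card V)) : Prop :=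
  ∀ σ : V ≃ Fin (Fintype.card V), fwdCount E σ ≤ fwdCount E τ

/-- An `n`-vertex tournament is `ε`-intransitive if every vertex ordering has at
least `ε n²` backward edges. -/
def IsIntransitive {V : Type} [Fintype V] (E : V → V → Prop) (ε : ℝ) : Prop :=
  ∀ σ : V ≃ Fin (Fintype.card V),
    ε * (Fintype.card V : ℝ) ^ 2 ≤ (backCount E σ : ℝ)

/-- The sets `A lo ≺ A (lo+1) ≺ ⋯ ≺ A hi` form a splitting of an interval of the
ordering `τ` into consecutive subintervals of size `m` each. -/
def IsIntervalSplit {V : Type} [Fintype V] (τ : V ≃ Fin (Fintype.card V))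
    (m lo hi : ℕ) (A : ℕ → Finset V) : Prop :=
  ∃ a : ℕ, ∀ i, lo ≤ i → i ≤ hi → ∀ v : V,
    v ∈ A i ↔ (a + i * m ≤ (τ v : ℕ) ∧ (τ v : ℕ) < a + (i + 1) * m)

/-- `H` is a `k`-absorber with absorbing part `Q`. -/
def IsAbsorber {V : Type} (E : V → V → Prop) (k : ℕ) (H Q : Finset V) : Prop :=
  ∃ (r : ℕ) (S : ℕ → Finset V) (q : ℕ → V),
    2 ^ (10 * k) < r ∧
    (∀ i j, i ≤ r → j ≤ r → i ≠ j → Disjoint (S i) (S j)) ∧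
    (∀ i ≤ r, Disjoint (S i) Q) ∧
    H = (Finset.range (r + 1)).biUnion S ∪ Q ∧
    Q = (Finset.Icc 1 (2 ^ (10 * k))).image q ∧
    Set.InjOn q (Set.Icc 1 (2 ^ (10 * k))) ∧
    (∀ i ≤ r, (S i).card = 2 * k ∧ IsTransitiveOn E (S i)) ∧
    (∀ i < r, Dominates E (S i) (S (i + 1))) ∧
    Dominates E (S r) (S 0) ∧
    Dominates E (S 0) Q ∧
    Dominates E Q (S (2 ^ (10 * k) + 1)) ∧
    (∀ i, 1 ≤ i → i ≤ 2 ^ (10 * k) →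
      Dominates E (S i) {q i} ∧ Dominates E {q i} (S (i + 1)))


/-!
Take a median order of the tournament, one maximising the number of forward edges. In it every
vertex dominates at least half of the vertices between itself and any later position. Cut the
order into windows of length `g ≈ 2 ^ (4k + 5) / (k + 1)` and keep a transitive chain `Y` of
`2k + 2` vertices inside one window. Each vertex of `Y` dominates about half of the next `2k + 2`
windows, so counting pairs (`k`-subset of `Y`, common out-neighbour) yields a `k`-subset
`S ⊆ Y` with at least `(k + 1) 2 ^ (2k + 2)` common out-neighbours there. One window holds
`2 ^ (2k + 1)` of them, hence a new transitive chain `Y'` of `2k + 2` vertices dominated by `S`.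
Concatenating the blocks `S` gives the `k`-th power of a path, with `k` vertices for every at
most `(2k + 2) g ≤ 2 ^ (4k + 6)` positions of the order.
-/

section

variable {V : Type} {E : V → V → Prop}

def IsPathPowerList (E : V → V → Prop) (k : ℕ) (l : List V) : Prop :=
  ∀ i j (hi : i < l.length) (hj : j < l.length), i < j → j ≤ i + k → E l[i] l[j]

lemma List.Pairwise.isPathPowerList {l : List V} (h : l.Pairwise E) (k : ℕ) :
    IsPathPowerList E k l :=
  fun i j hi hj hij _ => List.pairwise_iff_getElem.mp h i j hi hj hij

lemma IsPathPowerList.append {k : ℕ} {S xs : List V} (hS : S.Pairwise E)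
    (hxs : IsPathPowerList E k xs) (hSxs : ∀ s ∈ S, ∀ u ∈ xs.take k, E s u) :
    IsPathPowerList E k (S ++ xs) := by
  intro i j hi hj hij hjk
  simp only [List.length_append] at hi hj
  rcases lt_or_ge j S.length with hjS | hjS
  · rw [List.getElem_append_left (by omega), List.getElem_append_left hjS]
    exact List.pairwise_iff_getElem.mp hS i j _ _ hij
  rw [List.getElem_append_right hjS]
  rcases lt_or_ge i S.length with hiS | hiS
  · rw [List.getElem_append_left hiS]
    refine hSxs _ (List.getElem_mem _) _ ?_
    rw [← List.getElem_take (j := k) (h := by simp; omega)]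
    exact List.getElem_mem _
  · rw [List.getElem_append_right hiS]
    exact hxs _ _ _ _ (by omega) (by omega)

lemma IsPathPowerList.isPathPower {k : ℕ} {l : List V} (hl : l.Nodup)
    (h : IsPathPowerList E k l) : IsPathPower E k l.length (fun i => l[i]) :=
  ⟨List.nodup_iff_injective_get.mp hl, fun i j => h i j i.2 j.2⟩

namespace IsTournament

lemma nodup_of_pairwise (hT : IsTournament E) {l : List V} (h : l.Pairwise E) : l.Nodup :=
  h.imp fun {a _} hab => by rintro rfl; exact hT.1 a hab

lemma exists_chain (hT : IsTournament E) (t : ℕ) :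
    ∀ A : Finset V, 2 ^ t ≤ #A →
      ∃ l : List V, l.length = t + 1 ∧ l.Pairwise E ∧ ∀ x ∈ l, x ∈ A := by
  induction t with
  | zero =>
    intro A hA
    obtain ⟨v, hv⟩ : A.Nonempty := card_pos.mp hA
    exact ⟨[v], rfl, List.pairwise_singleton E v, by simpa⟩
  | succ t ih =>
    intro A hA
    rw [pow_succ] at hA
    obtain ⟨v, hv⟩ : A.Nonempty := card_pos.mp (lt_of_lt_of_le (by positivity) hA)
    have hsplit := card_filter_add_card_filter_not (s := A.erase v) (fun u => E v u)
    rw [card_erase_of_mem hv] at hsplit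
    by_cases hout : 2 ^ t ≤ #{u ∈ A.erase v | E v u}
    · obtain ⟨l, hl, hlE, hlA⟩ := ih _ hout
      refine ⟨v :: l, by simp [hl], List.pairwise_cons.mpr ⟨?_, hlE⟩, ?_⟩
      · exact fun u hu => (mem_filter.mp (hlA u hu)).2
      · simp only [List.mem_cons, forall_eq_or_imp]
        exact ⟨hv, fun u hu => mem_of_mem_erase (mem_filter.mp (hlA u hu)).1⟩
    · obtain ⟨l, hl, hlE, hlA⟩ := ih {u ∈ A.erase v | ¬ E v u} (by omega)
      refine ⟨l ++ [v], by simp [hl], List.pairwise_append.mpr ⟨hlE, by simp, ?_⟩, ?_⟩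
      · intro u hu w hw
        obtain ⟨hu, hvu⟩ := mem_filter.mp (hlA u hu)
        rw [List.mem_singleton.mp hw]
        exact (hT.2 u v (ne_of_mem_erase hu)).mpr hvu
      · simp only [List.mem_append, List.mem_singleton]
        rintro u (hu | rfl)
        · exact mem_of_mem_erase (mem_filter.mp (hlA u hu)).1
        · exact hv

end IsTournament

/-- Chosen so that `2k + 2` consecutive windows of this length fit into `2 ^ (4k + 6)`
positions. -/
def winLen (k : ℕ) : ℕ := 2 ^ (4 * k + 5) / (k + 1)

lemma two_pow_le_winLen (k : ℕ) : 2 ^ (2 * k + 1) ≤ winLen k := by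
  rw [winLen, Nat.le_div_iff_mul_le (Nat.succ_pos k)]
  calc 2 ^ (2 * k + 1) * (k + 1) ≤ 2 ^ (2 * k + 1) * 2 ^ (2 * k + 4) :=
        Nat.mul_le_mul_left _ (by have := Nat.lt_two_pow_self (n := 2 * k + 4); omega)
    _ = 2 ^ (4 * k + 5) := by rw [← pow_add]; ring_nf

lemma mul_winLen_le_two_pow (k : ℕ) : (2 * k + 2) * winLen k ≤ 2 ^ (4 * k + 6) :=
  calc (2 * k + 2) * winLen k = 2 * ((k + 1) * (2 ^ (4 * k + 5) / (k + 1))) := by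
        rw [winLen]; ring
    _ ≤ 2 * 2 ^ (4 * k + 5) := Nat.mul_le_mul_left _ (Nat.mul_div_le _ _)
    _ = 2 ^ (4 * k + 6) := by ring

lemma two_pow_mul_choose_le_mul_winLen (k : ℕ) :
    2 ^ (2 * k + 3) * (2 * k + 2).choose k ≤ (k + 1) * winLen k := by
  have hchoose : (2 * k + 2).choose k + 1 ≤ 2 ^ (2 * k + 2) :=
    Nat.choose_lt_two_pow _ _ (by omega)
  have hmul := Nat.mul_le_mul_left (2 ^ (2 * k + 3)) hchoose
  have hdiv := Nat.lt_div_mul_add (a := 2 ^ (4 * k + 5)) (Nat.succ_pos k)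
  have hk : k + 1 ≤ 2 ^ (2 * k + 3) := by have := Nat.lt_two_pow_self (n := 2 * k + 3); omega
  rw [← pow_add, show 2 * k + 3 + (2 * k + 2) = 4 * k + 5 by ring] at hmul
  rw [winLen, mul_comm (k + 1)]
  nlinarith

section MedianOrder

variable [Fintype V]

def orderIco (σ : V ≃ Fin (Fintype.card V)) (a b : ℕ) : Finset V :=
  {u | a ≤ (σ u : ℕ) ∧ (σ u : ℕ) < b}

variable {σ : V ≃ Fin (Fintype.card V)} {a b : ℕ}

@[simp] lemma mem_orderIco {u : V} : u ∈ orderIco σ a b ↔ a ≤ (σ u : ℕ) ∧ (σ u : ℕ) < b := by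
  simp [orderIco]

lemma card_orderIco (hb : b ≤ Fintype.card V) : #(orderIco σ a b) = b - a := by
  rw [← Nat.card_Ico a b]
  refine card_nbij (fun u => (σ u : ℕ)) (fun u hu => by simpa using hu)
    (fun u _ w _ h => σ.injective (Fin.ext h)) fun m hm => ?_
  simp only [coe_Ico, Set.mem_Ico] at hm
  exact ⟨σ.symm ⟨m, by omega⟩, by simpa using hm, by simp⟩

lemma exists_isMedianOrder (E : V → V → Prop) : ∃ τ, IsMedianOrder E τ := by
  obtain ⟨τ, -, hτ⟩ := exists_max_image univ (fwdCount E) ⟨Fintype.equivFin V, mem_univ _⟩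
  exact ⟨τ, fun σ => hτ σ (mem_univ σ)⟩

lemma fwdCount_eq_sum (E : V → V → Prop) (σ : V ≃ Fin (Fintype.card V)) :
    fwdCount E σ = ∑ a, ∑ c, if E a c ∧ σ a < σ c then 1 else 0 := by
  rw [fwdCount, card_filter, ← univ_product_univ, sum_product]

def rotFun (p b x : ℕ) : ℕ := if x = p then b - 1 else if p < x ∧ x < b then x - 1 else x

noncomputable def rotPerm {n : ℕ} {p b : ℕ} (hpb : p < b) (hb : b ≤ n) : Equiv.Perm (Fin n) :=
  Equiv.ofBijective (fun x => ⟨rotFun p b x, by have := x.2; unfold rotFun; split_ifs <;> omega⟩)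
    (Finite.injective_iff_bijective.mp fun x y h => Fin.ext <| by
      simp only [Fin.mk.injEq, rotFun] at h; split_ifs at h <;> omega)

/-- Only the pairs containing `v` change their relative order, namely those whose other vertex lies
strictly between positions `σ v` and `b`. -/
lemma ite_sub_ite_trans_rotPerm (hT : IsTournament E) {v : V} (hvb : (σ v : ℕ) < b)
    (hb : b ≤ Fintype.card V) (x y : V) :
    ((if E x y ∧ σ x < σ y then 1 else 0 : ℤ) -
      if E x y ∧ (σ.trans (rotPerm hvb hb)) x < (σ.trans (rotPerm hvb hb)) y then 1 else 0) =
      (if x = v then (if E v y ∧ y ∈ orderIco σ (σ v + 1) b then 1 else 0) else 0) -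
        (if y = v then (if E x v ∧ x ∈ orderIco σ (σ v + 1) b then 1 else 0) else 0) := by
  have hpos : ∀ u, u ≠ v → (σ u : ℕ) ≠ σ v := fun u hu h => hu (σ.injective (Fin.ext h))
  simp only [Equiv.trans_apply, Fin.lt_def, rotPerm, Equiv.ofBijective_apply, rotFun, mem_orderIco]
  by_cases hE : E x y
  swap
  · have : x = v → ¬ E v y := fun h => h ▸ hE
    have : y = v → ¬ E x v := fun h => h ▸ hE
    simp_all
  by_cases hx : x = v <;> by_cases hy : y = v
  · rw [hx, hy] at hE; exact absurd hE (hT.1 v)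
  · subst hx
    have := hpos y hy
    simp only [hE, true_and, if_true, hy, if_false, sub_zero]
    split_ifs <;> omega
  · subst hy
    have := hpos x hx
    simp only [hE, true_and, if_true, hx, if_false, zero_sub]
    split_ifs <;> omega
  · have := hpos x hx
    have := hpos y hy
    simp only [hE, true_and, hx, hy, if_false, sub_zero]
    split_ifs <;> omega

lemma fwdCount_sub_fwdCount_rotPerm (hT : IsTournament E) {v : V} (hvb : (σ v : ℕ) < b)
    (hb : b ≤ Fintype.card V) :
    (fwdCount E σ : ℤ) - fwdCount E (σ.trans (rotPerm hvb hb)) =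
      #{u ∈ orderIco σ (σ v + 1) b | E v u} - #{u ∈ orderIco σ (σ v + 1) b | E u v} := by
  rw [fwdCount_eq_sum, fwdCount_eq_sum]
  push_cast
  rw [← sum_sub_distrib]
  simp_rw [← sum_sub_distrib, ite_sub_ite_trans_rotPerm hT hvb hb]
  simp only [sum_sub_distrib, sum_ite_irrel, sum_const_zero, sum_ite_eq', mem_univ, if_true,
    sum_boole]
  congr 3 <;> ext <;> simp [and_comm]

/-- The feedback property of median orders: a vertex dominates at least half of the vertices
between itself and any later position `b`, since moving it to just before `b` cannot increase the
number of forward edges. -/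
theorem IsMedianOrder.le_two_mul_card_out (hT : IsTournament E) (hσ : IsMedianOrder E σ)
    {v : V} {g L : ℕ} (hv : v ∈ orderIco σ a (a + g)) (hL : a + g + L ≤ Fintype.card V) :
    L + 1 ≤ 2 * #{u ∈ orderIco σ (a + g) (a + g + L) | E v u} + g := by
  rw [mem_orderIco] at hv
  have hvb : (σ v : ℕ) < a + g + L := by omega
  have hmed := hσ (σ.trans (rotPerm hvb hL))
  have hdiff := fwdCount_sub_fwdCount_rotPerm hT hvb hL
  set W := orderIco σ (σ v + 1) (a + g + L)
  have hin : {u ∈ W | ¬ E v u} = {u ∈ W | E u v} := filter_congr fun u hu => by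
    have huv : u ≠ v := by rintro rfl; simp [W] at hu
    exact ⟨(hT.2 u v huv).mpr, (hT.2 u v huv).mp⟩
  have hsplit := card_filter_add_card_filter_not (s := W) (fun u => E v u)
  rw [hin, card_orderIco hL] at hsplit
  have hsub : {u ∈ W | E v u} ⊆
      orderIco σ (σ v + 1) (a + g) ∪ {u ∈ orderIco σ (a + g) (a + g + L) | E v u} := by
    intro u hu
    simp only [mem_filter, mem_orderIco, mem_union, W] at hu ⊢
    by_cases hug : (σ u : ℕ) < a + g
    · exact .inl ⟨hu.1.1, hug⟩
    · exact .inr ⟨⟨by omega, hu.1.2⟩, hu.2⟩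
  have hcard := (card_le_card hsub).trans (card_union_le _ _)
  rw [card_orderIco (by omega)] at hcard
  omega

end MedianOrder

/-- `d ↦ d.choose k` stays above the line through `(k, 1)` of slope `(k + 1) / 2`. -/
lemma two_add_mul_le_two_mul_choose {k : ℕ} (hk : 1 ≤ k) (d : ℕ) :
    2 + d * (k + 1) ≤ 2 * d.choose k + k * (k + 1) := by
  obtain ⟨j, rfl⟩ : ∃ j, k = j + 1 := ⟨k - 1, by omega⟩
  induction d with
  | zero => simp; nlinarith
  | succ d ih =>
    rw [Nat.choose_succ_succ']
    rcases lt_trichotomy d j with hd | rfl | hd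
    · rw [Nat.choose_eq_zero_of_lt hd, Nat.choose_eq_zero_of_lt (by omega)]
      nlinarith
    · simp
    · have := (Nat.choose_succ_self_right j).symm.trans_le (Nat.choose_le_choose j hd)
      nlinarith

lemma sum_card_filter_forall_eq_sum_choose {α β : Type*} (R : α → β → Prop) (Y : Finset α)
    (C : Finset β) (k : ℕ) :
    ∑ S ∈ Y.powersetCard k, #{c ∈ C | ∀ y ∈ S, R y c} =
      ∑ c ∈ C, (#{y ∈ Y | R y c}).choose k := by
  refine (sum_card_bipartiteAbove_eq_sum_card_bipartiteBelow fun S c => ∀ y ∈ S, R y c).trans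
    (sum_congr rfl fun c _ => ?_)
  rw [← card_powersetCard]
  congr 1
  ext S
  simp only [bipartiteBelow, mem_filter, mem_powersetCard, subset_iff]
  aesop

/-- Double count the pairs (`k`-subset of `Y`, common neighbour in `C`), using the convexity
bound above. -/
lemma exists_powersetCard_sq_mul_le {α β : Type*} (R : α → β → Prop) {k g : ℕ} (hk : 1 ≤ k)
    {Y : Finset α} {C : Finset β} (hY : #Y = 2 * k + 2) (hC : #C = (2 * k + 2) * g)
    (hdeg : ∀ y ∈ Y, (2 * k + 2) * g + 1 ≤ 2 * #{c ∈ C | R y c} + g) :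
    ∃ S ∈ Y.powersetCard k, ∃ A ⊆ C, (∀ c ∈ A, ∀ y ∈ S, R y c) ∧
      (k + 1) ^ 2 * g ≤ 2 * (2 * k + 2).choose k * #A := by
  have hdeg_sum : (2 * k + 2) * ((2 * k + 2) * g + 1) ≤
      2 * ∑ c ∈ C, #{y ∈ Y | R y c} + (2 * k + 2) * g := by
    have hD : ∑ y ∈ Y, #{c ∈ C | R y c} = ∑ c ∈ C, #{y ∈ Y | R y c} :=
      sum_card_bipartiteAbove_eq_sum_card_bipartiteBelow R
    have := sum_le_sum hdeg
    rw [sum_const, sum_add_distrib, sum_const, ← mul_sum, hY, hD, smul_eq_mul, smul_eq_mul] at this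
    exact this
  have hchoose_sum : 2 * #C + (∑ c ∈ C, #{y ∈ Y | R y c}) * (k + 1) ≤
      2 * ∑ S ∈ Y.powersetCard k, #{c ∈ C | ∀ y ∈ S, R y c} + #C * (k * (k + 1)) := by
    have := sum_le_sum fun c (_ : c ∈ C) => two_add_mul_le_two_mul_choose hk #{y ∈ Y | R y c}
    rw [sum_card_filter_forall_eq_sum_choose]
    simp only [sum_add_distrib, sum_const, smul_eq_mul, ← sum_mul, ← mul_sum] at this
    linarith
  obtain ⟨S, hS, hmax⟩ := exists_max_image (Y.powersetCard k)
    (fun S => #{c ∈ C | ∀ y ∈ S, R y c}) (powersetCard_nonempty.mpr (by omega))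
  have havg := sum_le_card_nsmul _ _ _ hmax
  rw [card_powersetCard, hY, smul_eq_mul] at havg
  refine ⟨S, hS, _, filter_subset _ _, fun c hc => (mem_filter.mp hc).2, ?_⟩
  rw [hC] at hchoose_sum
  nlinarith [Nat.mul_le_mul_left (k + 1) hdeg_sum]

section Construction

variable [Fintype V] {σ : V ≃ Fin (Fintype.card V)} {k g : ℕ}

lemma pos_of_two_pow_mul_choose_le (hg : 2 ^ (2 * k + 3) * (2 * k + 2).choose k ≤ (k + 1) * g) :
    0 < g :=
  Nat.pos_of_mul_pos_left <|
    (Nat.mul_pos (Nat.two_pow_pos _) (Nat.choose_pos (by omega))).trans_le hg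

lemma exists_le_card_filter_orderIco {A : Finset V} {c m N : ℕ} (hm : 0 < m) (hg : 0 < g)
    (hA : A ⊆ orderIco σ c (c + m * g)) (hN : m * N ≤ #A) :
    ∃ t < m, N ≤ #{u ∈ A | u ∈ orderIco σ (c + t * g) (c + t * g + g)} := by
  have hmaps : ∀ u ∈ A, ((σ u : ℕ) - c) / g ∈ range m := fun u hu => by
    have := mem_orderIco.mp (hA hu)
    rw [mem_range, Nat.div_lt_iff_lt_mul hg]
    omega
  obtain ⟨t, ht, hfib⟩ := exists_le_card_fiber_of_mul_le_card_of_maps_to hmaps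
    (nonempty_range_iff.mpr hm.ne') (by rwa [card_range])
  refine ⟨t, mem_range.mp ht, hfib.trans (card_le_card fun u hu => ?_)⟩
  obtain ⟨huA, rfl⟩ := mem_filter.mp hu
  have := mem_orderIco.mp (hA huA)
  have hlo := Nat.div_mul_le_self ((σ u : ℕ) - c) g
  have hhi := Nat.lt_div_mul_add (a := (σ u : ℕ) - c) hg
  exact mem_filter.mpr ⟨huA, mem_orderIco.mpr ⟨by omega, by omega⟩⟩

theorem IsMedianOrder.exists_next_block (hT : IsTournament E) (hσ : IsMedianOrder E σ)
    (hk : 1 ≤ k) (hg : 2 ^ (2 * k + 3) * (2 * k + 2).choose k ≤ (k + 1) * g) {a : ℕ}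
    (ha : a + (2 * k + 3) * g ≤ Fintype.card V) {Y : List V} (hYlen : Y.length = 2 * k + 2)
    (hYE : Y.Pairwise E) (hY : ∀ y ∈ Y, y ∈ orderIco σ a (a + g)) :
    ∃ (S Y' : List V) (a' : ℕ), S.Sublist Y ∧ S.length = k ∧ Y'.length = 2 * k + 2 ∧
      Y'.Pairwise E ∧ (∀ y ∈ Y', y ∈ orderIco σ a' (a' + g)) ∧
      (∀ s ∈ S, ∀ y ∈ Y', E s y) ∧ a + g ≤ a' ∧ a' ≤ a + (2 * k + 2) * g := by
  have hchoose : 0 < (2 * k + 2).choose k := Nat.choose_pos (by omega)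
  have hg_pos := pos_of_two_pow_mul_choose_le hg
  have hYnd := hT.nodup_of_pairwise hYE
  have hYcard : #Y.toFinset = 2 * k + 2 := by rw [List.toFinset_card_of_nodup hYnd, hYlen]
  have hC : #(orderIco σ (a + g) (a + g + (2 * k + 2) * g)) = (2 * k + 2) * g := by
    rw [card_orderIco (by linarith)]; omega
  have hdeg : ∀ y ∈ Y.toFinset, (2 * k + 2) * g + 1 ≤
      2 * #{c ∈ orderIco σ (a + g) (a + g + (2 * k + 2) * g) | E y c} + g := fun y hy =>
    hσ.le_two_mul_card_out hT (hY y (List.mem_toFinset.mp hy)) (by linarith)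
  obtain ⟨S, hS, A, hAC, hSA, hSC⟩ := exists_powersetCard_sq_mul_le E hk hYcard hC hdeg
  rw [mem_powersetCard] at hS
  have hcount : 2 * (2 * k + 2).choose k * ((2 * k + 2) * 2 ^ (2 * k + 1)) ≤ (k + 1) ^ 2 * g :=
    calc 2 * (2 * k + 2).choose k * ((2 * k + 2) * 2 ^ (2 * k + 1))
        = (k + 1) * (2 ^ (2 * k + 3) * (2 * k + 2).choose k) := by ring
      _ ≤ (k + 1) * ((k + 1) * g) := Nat.mul_le_mul_left _ hg
      _ = (k + 1) ^ 2 * g := by ring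
  have hA := Nat.le_of_mul_le_mul_left (hcount.trans hSC) (by positivity)
  obtain ⟨t, ht, hAt⟩ := exists_le_card_filter_orderIco (by omega) hg_pos hAC hA
  obtain ⟨Y', hY'len, hY'E, hY'⟩ := hT.exists_chain (2 * k + 1) _ hAt
  refine ⟨Y.filter (· ∈ S), Y', a + g + t * g, List.filter_sublist, ?_, hY'len, hY'E,
    fun y hy => (mem_filter.mp (hY' y hy)).2, fun s hs y hy => ?_, by omega, ?_⟩
  · rw [← List.toFinset_card_of_nodup (hYnd.filter _), ← hS.2]
    congr 1
    ext y
    simpa using fun hy => List.mem_toFinset.mp (hS.1 hy)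
  · exact hSA y (mem_filter.mp (hY' y hy)).1 s (by simpa using (List.mem_filter.mp hs).2)
  · nlinarith

theorem IsMedianOrder.exists_pathPowerList_of_window (hT : IsTournament E)
    (hσ : IsMedianOrder E σ) (hk : 1 ≤ k)
    (hg : 2 ^ (2 * k + 3) * (2 * k + 2).choose k ≤ (k + 1) * g) (a : ℕ) (Y : List V)
    (hYlen : Y.length = 2 * k + 2) (hYE : Y.Pairwise E)
    (hY : ∀ y ∈ Y, y ∈ orderIco σ a (a + g)) :
    ∃ xs : List V, xs.Nodup ∧ IsPathPowerList E k xs ∧ (∀ u ∈ xs.take k, u ∈ Y) ∧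
      (∀ u ∈ xs, a ≤ (σ u : ℕ)) ∧ k * (Fintype.card V - a) ≤ (2 * k + 2) * g * xs.length := by
  by_cases ha : a + (2 * k + 3) * g ≤ Fintype.card V
  · obtain ⟨S, Y', a', hSY, hSlen, hY'len, hY'E, hY', hSY', haa', ha'⟩ :=
      hσ.exists_next_block hT hk hg ha hYlen hYE hY
    have hdec : Fintype.card V - a' < Fintype.card V - a := by
      have := pos_of_two_pow_mul_choose_le hg
      have := Nat.mul_le_mul_right g (show 1 ≤ 2 * k + 3 by omega)
      omega
    obtain ⟨xs, hnd, hxs, htake, hpos, hlen⟩ :=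
      hσ.exists_pathPowerList_of_window hT hk hg a' Y' hY'len hY'E hY'
    have hSE : S.Pairwise E := hYE.sublist hSY
    have hSpos : ∀ s ∈ S, a ≤ (σ s : ℕ) ∧ (σ s : ℕ) < a' := fun s hs => by
      have := mem_orderIco.mp (hY s (hSY.subset hs)); omega
    refine ⟨S ++ xs, ?_, IsPathPowerList.append hSE hxs ?_, ?_, ?_, ?_⟩
    · refine List.nodup_append.mpr ⟨hT.nodup_of_pairwise hSE, hnd, fun s hs u hu => ?_⟩
      have := hSpos s hs; have := hpos u hu
      rintro rfl; omega
    · exact fun s hs u hu => hSY' s hs u (htake u hu)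
    · rw [List.take_left' hSlen]
      exact fun u hu => hSY.subset hu
    · intro u hu
      rcases List.mem_append.mp hu with hu | hu
      · exact (hSpos u hu).1
      · have := hpos u hu; omega
    · rw [List.length_append, hSlen]
      have : Fintype.card V - a ≤ Fintype.card V - a' + (2 * k + 2) * g := by omega
      nlinarith
  · refine ⟨Y, hT.nodup_of_pairwise hYE, hYE.isPathPowerList k,
      fun u hu => List.mem_of_mem_take hu, fun u hu => (mem_orderIco.mp (hY u hu)).1, ?_⟩
    have : Fintype.card V - a ≤ (2 * k + 3) * g := by omega
    rw [hYlen]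
    nlinarith
termination_by Fintype.card V - a

end Construction

theorem IsTournament.exists_pathPowerList [Fintype V] (hT : IsTournament E) {k : ℕ}
    (hk : 1 ≤ k) :
    ∃ xs : List V, xs.Nodup ∧ IsPathPowerList E k xs ∧
      k * Fintype.card V ≤ 2 ^ (4 * k + 6) * xs.length := by
  have hL := mul_winLen_le_two_pow k
  by_cases hn : winLen k ≤ Fintype.card V
  · obtain ⟨σ, hσ⟩ := exists_isMedianOrder E
    obtain ⟨Y, hYlen, hYE, hY⟩ := hT.exists_chain (2 * k + 1) (orderIco σ 0 (winLen k))
      (by rw [card_orderIco hn]; exact two_pow_le_winLen k)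
    obtain ⟨xs, hnd, hxs, -, -, hlen⟩ := hσ.exists_pathPowerList_of_window hT hk
      (two_pow_mul_choose_le_mul_winLen k) 0 Y hYlen hYE (by simpa using hY)
    exact ⟨xs, hnd, hxs, by simpa using hlen.trans (Nat.mul_le_mul_right _ hL)⟩
  · rcases isEmpty_or_nonempty V with hV | ⟨⟨v⟩⟩
    · exact ⟨[], List.nodup_nil, List.Pairwise.nil.isPathPowerList k, by simp⟩
    · refine ⟨[v], List.nodup_singleton v, (List.pairwise_singleton E v).isPathPowerList k, ?_⟩
      rw [List.length_singleton, mul_one]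
      nlinarith

end

/-- Every tournament on `n` vertices contains the `k`-th power of a
directed path on at least `k·n/2^(4k+6)` vertices. -/
theorem statement_0 (k : ℕ) (hk : 1 ≤ k) (V : Type) [Fintype V]
    (E : V → V → Prop) (hT : IsTournament E) :
    ∃ (m : ℕ) (x : Fin m → V), IsPathPower E k m x ∧
      (k : ℝ) * (Fintype.card V : ℝ) / 2 ^ (4 * k + 6) ≤ (m : ℝ) := by
  obtain ⟨xs, hnd, hxs, hlen⟩ := hT.exists_pathPowerList hk
  refine ⟨xs.length, fun i => xs[i], hxs.isPathPower hnd, ?_⟩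
  rw [div_le_iff₀ (by positivity)]
  exact_mod_cast hlen.trans_eq (mul_comm _ _)
end

section
/- Let G = (A ∪ B, E) be a finite bipartite graph such that for some 0 < β ≤ 1/2 every vertex of A has at least β|B| neighbours in B. If |A| ≥ k/β, then A contains a subset X of size k whose vertices have at least β^{4k}|B| common neighbours in B. -/
open Finset

attribute [local instance] Classical.propDecidable

/-! Counting pairs (k-subset X of A, common neighbour of X) in two ways and applying Jensen's
inequality to the convex function x ↦ x(x-1)⋯(x-k+1) yields a k-subset with at least
#B · (βn)(βn-1)⋯(βn-k+1) / n(n-1)⋯(n-k+1) common neighbours, where n = #A.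
Since βn ≥ k, each factor (βn-i)/(n-i) is at least β(k-i)/k, and k!/k^k ≥ 3^(-k) ≥ β^(3k). -/

open Polynomial

namespace Finset

variable {α β : Type*}

lemma powersetCard_filter (s : Finset α) (p : α → Prop) (k : ℕ) :
    (s.filter p).powersetCard k = (s.powersetCard k).filter fun X => ∀ x ∈ X, p x := by
  ext X
  simp only [mem_powersetCard, mem_filter, subset_iff]
  grind

variable (R : α → β → Prop) (A : Finset α) (B : Finset β)

lemma sum_card_commonNeighbors_eq_sum_choose (k : ℕ) :
    ∑ X ∈ A.powersetCard k, #(B.filter fun b => ∀ x ∈ X, R x b) =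
      ∑ b ∈ B, (#(A.bipartiteBelow R b)).choose k := by
  refine (sum_card_bipartiteAbove_eq_sum_card_bipartiteBelow (s := A.powersetCard k) (t := B)
    fun X b => ∀ x ∈ X, R x b).trans (sum_congr rfl fun b _ => ?_)
  rw [bipartiteBelow, bipartiteBelow, ← powersetCard_filter, card_powersetCard]

lemma exists_sum_descFactorial_le_mul_card_commonNeighbors {k : ℕ} (hk : k ≤ #A) :
    ∃ X ∈ A.powersetCard k, ∑ b ∈ B, (#(A.bipartiteBelow R b)).descFactorial k ≤
      (#A).descFactorial k * #(B.filter fun b => ∀ x ∈ X, R x b) := by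
  refine exists_le_of_sum_le (powersetCard_nonempty.2 hk) (le_of_eq ?_)
  simp only [sum_const, card_powersetCard, smul_eq_mul, ← mul_sum,
    sum_card_commonNeighbors_eq_sum_choose, Nat.descFactorial_eq_factorial_mul_choose]
  ring

end Finset

open Finset

lemma card_mul_descPochhammer_eval_le_sum_descFactorial {ι : Type*} {s : Finset ι} (p : ι → ℕ)
    {k : ℕ} (hk : k ≠ 0) {x : ℝ} (hx : k - 1 ≤ x) (hxp : #s * x ≤ ∑ i ∈ s, (p i : ℝ)) :
    #s * (descPochhammer ℝ k).eval x ≤ ∑ i ∈ s, ((p i).descFactorial k : ℝ) := by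
  rcases s.eq_empty_or_nonempty with rfl | hs
  · simp
  have hs₀ : (0 : ℝ) < #s := by exact_mod_cast hs.card_pos
  have havg : x ≤ ∑ i ∈ s, (#s : ℝ)⁻¹ * p i := by
    rwa [← mul_sum, le_inv_mul_iff₀ hs₀]
  have hjensen := descPochhammer_eval_le_sum_descFactorial hk p (fun _ => (#s : ℝ)⁻¹)
    (fun _ _ => by positivity) (by simp [hs₀.ne']) (hx.trans havg)
  calc #s * (descPochhammer ℝ k).eval x
      ≤ #s * (descPochhammer ℝ k).eval (∑ i ∈ s, (#s : ℝ)⁻¹ * p i) := by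
        gcongr
        exact monotoneOn_descPochhammer_eval k hx (hx.trans havg) havg
    _ ≤ #s * ∑ i ∈ s, (#s : ℝ)⁻¹ * (p i).descFactorial k := by gcongr
    _ = ∑ i ∈ s, ((p i).descFactorial k : ℝ) := by rw [← mul_sum, mul_inv_cancel_left₀ hs₀.ne']

lemma pow_self_le_three_pow_mul_factorial (k : ℕ) : (k : ℝ) ^ k ≤ 3 ^ k * k.factorial := by
  have hexp : Real.exp k ≤ 3 ^ k := by
    rw [← Real.exp_one_pow]
    gcongr
    exact Real.exp_one_lt_d9.le.trans (by norm_num)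
  have := Real.pow_div_factorial_le_exp (x := k) (Nat.cast_nonneg k) k
  rw [div_le_iff₀ (by positivity)] at this
  nlinarith [Nat.factorial_pos k]

lemma pow_mul_descFactorial_le_descPochhammer_eval {β : ℝ} {n k : ℕ} (hβ0 : 0 < β)
    (hβ : β ≤ 1 / 2) (hk : k ≤ β * n) :
    β ^ (4 * k) * n.descFactorial k ≤ (descPochhammer ℝ k).eval (β * n) := by
  obtain rfl | hk0 := eq_or_ne k 0
  · simp
  have hkpos : (0 : ℝ) < k := by positivity
  have hkn : (k : ℝ) ≤ n := hk.trans (mul_le_of_le_one_left (Nat.cast_nonneg _) (by linarith))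
  have hfactor : ∀ i ∈ range k, β * (k - i) * (n - i) / k ≤ β * n - i := by
    intro i hi
    have hik : (i : ℝ) + 1 ≤ k := by exact_mod_cast mem_range.1 hi
    rw [div_le_iff₀ hkpos]
    nlinarith [mul_nonneg (Nat.cast_nonneg (α := ℝ) i) (sub_nonneg.2 hk),
      mul_nonneg (mul_nonneg hβ0.le (Nat.cast_nonneg (α := ℝ) i)) (sub_nonneg.2 hik)]
  have hpow : (β ^ 3) ^ k * k ^ k ≤ k.factorial := by
    have hβ3 : β ^ 3 ≤ 1 / 3 := by nlinarith [pow_le_pow_left₀ hβ0.le hβ 3]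
    calc (β ^ 3) ^ k * k ^ k ≤ (1 / 3) ^ k * (3 ^ k * k.factorial) := by
          gcongr
          exact pow_self_le_three_pow_mul_factorial k
      _ = k.factorial := by rw [← mul_assoc, ← mul_pow]; norm_num
  have hprod (m : ℕ) : (m.descFactorial k : ℝ) = ∏ i ∈ range k, ((m : ℝ) - i) := by
    rw [← descPochhammer_eval_eq_descFactorial, descPochhammer_eval_eq_prod_range]
  calc β ^ (4 * k) * n.descFactorial k
      = β ^ k * ((β ^ 3) ^ k * k ^ k) * n.descFactorial k / k ^ k := by
        field_simp
        ring
    _ ≤ β ^ k * k.factorial * n.descFactorial k / k ^ k := by gcongr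
    _ = ∏ i ∈ range k, β * (k - i) * (n - i) / k := by
        rw [prod_div_distrib, prod_mul_distrib, prod_mul_distrib, prod_const, prod_const,
          card_range, ← hprod, ← hprod, Nat.descFactorial_self]
    _ ≤ ∏ i ∈ range k, (β * n - i) := by
        refine prod_le_prod (fun i hi => ?_) hfactor
        have hik : (i : ℝ) < k := by exact_mod_cast mem_range.1 hi
        have : 0 ≤ β * (k - i) * (n - i) := by
          apply mul_nonneg (mul_nonneg hβ0.le _) <;> linarith
        positivity
    _ = (descPochhammer ℝ k).eval (β * n) := (descPochhammer_eval_eq_prod_range _ _).symm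

theorem statement_5_general (V : Type) (A B : Finset V)
    (R : V → V → Prop) (β : ℝ) (k : ℕ) (hβ0 : 0 < β) (hβ : β ≤ 1 / 2)
    (hdeg : ∀ a ∈ A, β * (B.card : ℝ) ≤ ((B.filter fun b => R a b).card : ℝ))
    (hA : (k : ℝ) / β ≤ (A.card : ℝ)) :
    ∃ X ⊆ A, X.card = k ∧
      β ^ (4 * k) * (B.card : ℝ) ≤ ((B.filter fun b => ∀ x ∈ X, R x b).card : ℝ) := by
  obtain rfl | hk := eq_or_ne k 0
  · exact ⟨∅, empty_subset A, rfl, by simp⟩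
  have hkβ : (k : ℝ) ≤ β * #A := by rwa [div_le_iff₀ hβ0, mul_comm] at hA
  have hkA : k ≤ #A := by
    exact_mod_cast hkβ.trans (mul_le_of_le_one_left (Nat.cast_nonneg _) (by linarith))
  have hdegB : #B * (β * #A) ≤ ∑ b ∈ B, (#(A.bipartiteBelow R b) : ℝ) := by
    calc #B * (β * #A) = ∑ _a ∈ A, β * #B := by rw [sum_const, nsmul_eq_mul]; ring
      _ ≤ ∑ a ∈ A, (#(B.bipartiteAbove R a) : ℝ) := sum_le_sum hdeg
      _ = ∑ b ∈ B, (#(A.bipartiteBelow R b) : ℝ) := by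
        exact_mod_cast sum_card_bipartiteAbove_eq_sum_card_bipartiteBelow R
  obtain ⟨X, hX, hXB⟩ := exists_sum_descFactorial_le_mul_card_commonNeighbors R A B hkA
  obtain ⟨hXA, hXk⟩ := mem_powersetCard.1 hX
  refine ⟨X, hXA, hXk, le_of_mul_le_mul_right ?_ (Nat.cast_pos.2 (Nat.descFactorial_pos.2 hkA))⟩
  calc β ^ (4 * k) * #B * (#A).descFactorial k
      = #B * (β ^ (4 * k) * (#A).descFactorial k) := by ring
    _ ≤ #B * (descPochhammer ℝ k).eval (β * #A) := by
        gcongr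
        exact pow_mul_descFactorial_le_descPochhammer_eval hβ0 hβ hkβ
    _ ≤ ∑ b ∈ B, ((#(A.bipartiteBelow R b)).descFactorial k : ℝ) :=
        card_mul_descPochhammer_eval_le_sum_descFactorial _ hk (by linarith) hdegB
    _ ≤ (#A).descFactorial k * #(B.filter fun b => ∀ x ∈ X, R x b) := by exact_mod_cast hXB
    _ = #(B.filter fun b => ∀ x ∈ X, R x b) * (#A).descFactorial k := mul_comm _ _

/-- K\H{o}v\'ari–S\'os–Tur\'an-type lemma: if every vertex of `A` has at
least `β|B|` neighbours and `|A| ≥ k/β`, then some `k`-subset of `A` has at least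
`β^(4k)|B|` common neighbours in `B`. -/
theorem statement_5 (V : Type) (A B : Finset V) (hAB : Disjoint A B)
    (R : V → V → Prop) (β : ℝ) (k : ℕ) (hβ0 : 0 < β) (hβ : β ≤ 1 / 2)
    (hdeg : ∀ a ∈ A, β * (B.card : ℝ) ≤ ((B.filter fun b => R a b).card : ℝ))
    (hA : (k : ℝ) / β ≤ (A.card : ℝ)) :
    ∃ X ⊆ A, X.card = k ∧
      β ^ (4 * k) * (B.card : ℝ) ≤ ((B.filter fun b => ∀ x ∈ X, R x b).card : ℝ) :=
  statement_5_general V A B R β k hβ0 hβ hdeg hA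
end

section
/- Let A, B be disjoint vertex sets in a tournament with d(A,B) ≥ β for some 0 < β ≤ 1/2, and suppose |A|, |B| ≥ β^{-5k}. Then there exist sets X ⊆ A and Y ⊆ B, each of size k, each inducing a transitive subtournament, such that X ⇒ Y. -/
open Finset

attribute [local instance] Classical.propDecidable

/-! Dependent random choice. Keep the `N ≈ β^(-5k)` vertices of `A` with the largest
out-degrees into `B`; they still have density at least `β` to `B`. For a uniformly random
`2k`-tuple `w` of vertices of `B`, the set `U w` of vertices of this part dominating all of `w`
has expected size `∑ d(a)^(2k) / |B|^(2k) ≥ N β^(2k) ≥ 2^(3k)`, while a `k`-set with fewer than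
`β^(3k) |B|` common out-neighbours lies in `U w` with probability below `β^(6k²)`. Deleting
all such `k`-sets from a good `U w` leaves at least `2^k` vertices, every `k` of which have at
least `β^(3k) |B| ≥ 2^k` common out-neighbours in `B`. The Erdős–Moser bound (a tournament on
`2^k - 1` vertices contains a transitive `k`-set), applied in this set and then in the common
out-neighbourhood of the transitive set found there, gives `X` and `Y`. Expectations over `w`
are replaced by double counting over all tuples. -/

section Tournament

variable {V : Type} {E : V → V → Prop}

lemma IsTournament.asymm (hE : IsTournament E) {u v : V} (h : E u v) : ¬ E v u := by
  by_cases huv : u = v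
  · exact (hE.1 u (huv ▸ h)).elim
  · exact (hE.2 u v huv).1 h

lemma IsTransitiveOn.insert_top {T : Finset V} {v : V} (hT : IsTransitiveOn E T) (hv : v ∉ T)
    (hvv : ¬ E v v) (hvT : ∀ u ∈ T, ¬ E v u) : IsTransitiveOn E (insert v T) := by
  obtain ⟨f, hinj, hf⟩ := hT
  have hlt : ∀ u ∈ T, f u < T.sup f + 1 := fun u hu => Nat.lt_succ_of_le (le_sup hu)
  have hne : ∀ u ∈ T, u ≠ v := fun u hu => ne_of_mem_of_not_mem hu hv
  refine ⟨Function.update f v (T.sup f + 1), ?_, ?_⟩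
  · rw [coe_insert, Set.injOn_insert (by simpa using hv)]
    refine ⟨fun x hx y hy hxy => ?_, ?_⟩
    · simp only [Function.update_of_ne (hne x hx), Function.update_of_ne (hne y hy)] at hxy
      exact hinj hx hy hxy
    · rintro ⟨u, hu, hfu⟩
      simp only [Function.update_self, Function.update_of_ne (hne u hu)] at hfu
      exact (hlt u hu).ne hfu
  · intro u hu w hw huw
    rw [mem_insert] at hu hw
    rcases hu with rfl | hu <;> rcases hw with rfl | hw
    · exact (hvv huw).elim
    · exact (hvT w hw huw).elim
    · simpa [Function.update_of_ne (hne u hu)] using hlt u hu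
    · simpa [Function.update_of_ne (hne u hu), Function.update_of_ne (hne w hw)] using
        hf u hu w hw huw

lemma IsTransitiveOn.insert_bot {T : Finset V} {v : V} (hT : IsTransitiveOn E T) (hv : v ∉ T)
    (hvv : ¬ E v v) (hTv : ∀ u ∈ T, ¬ E u v) : IsTransitiveOn E (insert v T) := by
  obtain ⟨f, hinj, hf⟩ := hT
  have hne : ∀ u ∈ T, u ≠ v := fun u hu => ne_of_mem_of_not_mem hu hv
  refine ⟨Function.update (f · + 1) v 0, ?_, ?_⟩
  · rw [coe_insert, Set.injOn_insert (by simpa using hv)]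
    refine ⟨fun x hx y hy hxy => ?_, ?_⟩
    · simp only [Function.update_of_ne (hne x hx), Function.update_of_ne (hne y hy)] at hxy
      exact hinj hx hy (by omega)
    · rintro ⟨u, hu, hfu⟩
      simp [Function.update_of_ne (hne u hu)] at hfu
  · intro u hu w hw huw
    rw [mem_insert] at hu hw
    rcases hu with rfl | hu <;> rcases hw with rfl | hw
    · exact (hvv huw).elim
    · simp [Function.update_of_ne (hne w hw)]
    · exact (hTv u hu huw).elim
    · simpa [Function.update_of_ne (hne u hu), Function.update_of_ne (hne w hw)] using
        hf u hu w hw huw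

theorem IsTournament.exists_isTransitiveOn_subset (hE : IsTournament E) :
    ∀ (k : ℕ) {S : Finset V}, 2 ^ k ≤ #S + 1 → ∃ T ⊆ S, #T = k ∧ IsTransitiveOn E T
  | 0, _, _ => ⟨∅, empty_subset _, rfl, fun _ => 0, by simp, by simp⟩
  | k + 1, S, hS => by
    rw [pow_succ] at hS
    obtain ⟨v, hv⟩ : S.Nonempty := card_pos.1 (by have := k.one_le_two_pow; omega)
    have hsplit := card_filter_add_card_filter_not (s := S.erase v) (E v)
    rw [card_erase_of_mem hv] at hsplit
    have hinsert : ∀ {T}, T ⊆ S.erase v → insert v T ⊆ S ∧ #(insert v T) = #T + 1 :=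
      fun hT => ⟨insert_subset hv (hT.trans (erase_subset _ _)),
        card_insert_of_notMem fun h => by simpa using hT h⟩
    rcases le_total (#((S.erase v).filter fun u => ¬ E v u)) (#((S.erase v).filter (E v)))
      with hout | hin
    · obtain ⟨T, hTS, rfl, hT⟩ := hE.exists_isTransitiveOn_subset k (S := (S.erase v).filter (E v))
        (by omega)
      obtain ⟨hsub, hcard⟩ := hinsert (hTS.trans (filter_subset _ _))
      exact ⟨insert v T, hsub, hcard, hT.insert_bot (fun h => by simpa using hTS h) (hE.1 v)
        fun u hu => hE.asymm (mem_filter.1 (hTS hu)).2⟩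
    · obtain ⟨T, hTS, rfl, hT⟩ := hE.exists_isTransitiveOn_subset k
        (S := (S.erase v).filter fun u => ¬ E v u) (by omega)
      obtain ⟨hsub, hcard⟩ := hinsert (hTS.trans (filter_subset _ _))
      exact ⟨insert v T, hsub, hcard, hT.insert_top (fun h => by simpa using hTS h) (hE.1 v)
        fun u hu => (mem_filter.1 (hTS hu)).2⟩

end Tournament

section Averaging

variable {α : Type*}

theorem Finset.exists_subset_card_eq_mul_sum_le (f : α → ℝ) {N : ℕ} {A : Finset α}
    (hN : N ≤ #A) : ∃ A' ⊆ A, #A' = N ∧ N * ∑ a ∈ A, f a ≤ #A * ∑ a ∈ A', f a := by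
  induction A using Finset.strongInduction with
  | H A ih =>
  rcases Nat.eq_zero_or_pos N with rfl | hN0
  · exact ⟨∅, empty_subset _, rfl, by simp⟩
  rcases hN.eq_or_lt with hNA | hNA
  · exact ⟨A, Subset.rfl, hNA.symm, by rw [hNA]⟩
  obtain ⟨a, ha, hmin⟩ := A.exists_min_image f (card_pos.1 (by omega))
  obtain ⟨A', hA', hA'N, hsum⟩ :=
    ih (A.erase a) (erase_ssubset ha) (by rw [card_erase_of_mem ha]; omega)
  refine ⟨A', hA'.trans (erase_subset _ _), hA'N, ?_⟩
  have hmin' : #A * f a ≤ ∑ x ∈ A, f x := by simpa using card_nsmul_le_sum A f (f a) hmin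
  have hNA' : (N : ℝ) + 1 ≤ #A := by exact_mod_cast hNA
  rw [card_erase_of_mem ha, Nat.cast_sub (by omega), Nat.cast_one] at hsum
  rw [← add_sum_erase A f ha] at hmin' ⊢
  -- removing a minimum loses at most the average: `(#A - 1) * ∑_A f ≤ #A * ∑_{A \ a} f`
  have hN0' : (1 : ℝ) ≤ N := by exact_mod_cast hN0
  nlinarith

theorem Finset.card_mul_pow_le_sum_pow {ι : Type*} {s : Finset ι} {f : ι → ℝ} {c : ℝ}
    (hf : ∀ i ∈ s, 0 ≤ f i) (hc : 0 ≤ c) (h : #s * c ≤ ∑ i ∈ s, f i) (n : ℕ) :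
    #s * c ^ n ≤ ∑ i ∈ s, f i ^ n := by
  rcases s.eq_empty_or_nonempty with rfl | hs
  · simp
  cases n with
  | zero => simp
  | succ n =>
    have hs' : (0 : ℝ) < #s ^ n := by positivity
    refine le_of_mul_le_mul_left ?_ hs'
    calc (#s : ℝ) ^ n * (#s * c ^ (n + 1)) = (#s * c) ^ (n + 1) := by ring
      _ ≤ (∑ i ∈ s, f i) ^ (n + 1) := by gcongr
      _ ≤ #s ^ n * ∑ i ∈ s, f i ^ (n + 1) := pow_sum_le_card_mul_sum_pow hf n

theorem exists_subset_card_eq_le_sum_pow {β : Type*} (r : α → β → Prop) {A : Finset α}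
    {B : Finset β} {δ : ℝ} (hδ : 0 ≤ δ)
    (hd : δ * ((#A : ℝ) * #B) ≤ #((A ×ˢ B).filter fun p => r p.1 p.2)) {N : ℕ} (hN : N ≤ #A)
    (t : ℕ) : ∃ A' ⊆ A, #A' = N ∧ N * (δ * #B) ^ t ≤ ∑ a ∈ A', (#(B.filter (r a)) : ℝ) ^ t := by
  have hdeg : #((A ×ˢ B).filter fun p => r p.1 p.2) = ∑ a ∈ A, #(B.filter (r a)) := by
    simp only [card_filter, sum_product]
  obtain ⟨A', hA'A, rfl, hA'⟩ :=
    exists_subset_card_eq_mul_sum_le (fun a => (#(B.filter (r a)) : ℝ)) hN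
  refine ⟨A', hA'A, rfl,
    card_mul_pow_le_sum_pow (fun _ _ => Nat.cast_nonneg _) (by positivity) ?_ t⟩
  rcases A.eq_empty_or_nonempty with rfl | hA
  · simp [subset_empty.1 hA'A]
  rw [hdeg] at hd
  push_cast at hd
  have hA0 : (0 : ℝ) < #A := by exact_mod_cast hA.card_pos
  nlinarith

end Averaging

section DependentRandomChoice

variable {α β : Type*} (r : α → β → Prop)

noncomputable def commonNbhd (B : Finset β) (S : Finset α) : Finset β :=
  B.filter fun b => ∀ a ∈ S, r a b

theorem card_filter_piFinset_forall_rel (B : Finset β) (S : Finset α) (t : ℕ) :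
    #((Fintype.piFinset fun _ : Fin t => B).filter fun w => ∀ a ∈ S, ∀ i, r a (w i)) =
      #(commonNbhd r B S) ^ t := by
  have : ((Fintype.piFinset fun _ : Fin t => B).filter fun w => ∀ a ∈ S, ∀ i, r a (w i)) =
      Fintype.piFinset fun _ => commonNbhd r B S := by
    ext w
    simp only [mem_filter, Fintype.mem_piFinset, commonNbhd]
    grind
  rw [this, Fintype.card_piFinset, prod_const, card_univ, Fintype.card_fin]

theorem exists_subset_forall_le_card_commonNbhd {k : ℕ} (hk : 0 < k) (A : Finset α)
    (B : Finset β) (t : ℕ) (s : ℝ) {m : ℝ} (hm : 0 ≤ m)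
    (h : s * #B ^ t + k * (#A).choose k * m ^ t < ∑ a ∈ A, (#(B.filter (r a)) : ℝ) ^ t) :
    ∃ U ⊆ A, s < #U ∧ ∀ S ⊆ U, #S = k → m ≤ #(commonNbhd r B S) := by
  set W := Fintype.piFinset fun _ : Fin t => B
  set U : (Fin t → β) → Finset α := fun w => A.filter fun a => ∀ i, r a (w i)
  set bad := (A.powersetCard k).filter fun S => (#(commonNbhd r B S) : ℝ) < m
  set badIn : (Fin t → β) → Finset (Finset α) :=
    fun w => bad.filter fun S => ∀ a ∈ S, ∀ i, r a (w i)
  have hU : ∑ w ∈ W, #(U w) = ∑ a ∈ A, #(B.filter (r a)) ^ t :=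
    calc ∑ w ∈ W, #(U w) = ∑ a ∈ A, #(W.filter fun w => ∀ i, r a (w i)) :=
          (sum_card_bipartiteAbove_eq_sum_card_bipartiteBelow _).symm
      _ = _ := sum_congr rfl fun a _ => by
          simpa [commonNbhd] using card_filter_piFinset_forall_rel r B {a} t
  have hbad : ∑ w ∈ W, (#(badIn w) : ℝ) ≤ (#A).choose k * m ^ t := by
    have hcount : ∑ w ∈ W, #(badIn w) = ∑ S ∈ bad, #(commonNbhd r B S) ^ t :=
      calc ∑ w ∈ W, #(badIn w) = ∑ S ∈ bad, #(W.filter fun w => ∀ a ∈ S, ∀ i, r a (w i)) :=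
            (sum_card_bipartiteAbove_eq_sum_card_bipartiteBelow _).symm
        _ = _ := sum_congr rfl fun S _ => card_filter_piFinset_forall_rel r B S t
    have hcard : (#bad : ℝ) ≤ (#A).choose k := by
      exact_mod_cast (card_filter_le _ _).trans (card_powersetCard k A).le
    rw [← Nat.cast_sum, hcount, Nat.cast_sum]
    calc ∑ S ∈ bad, ((#(commonNbhd r B S) ^ t : ℕ) : ℝ) ≤ ∑ S ∈ bad, m ^ t :=
          sum_le_sum fun S hS => by
            push_cast
            exact pow_le_pow_left₀ (Nat.cast_nonneg _) (mem_filter.1 hS).2.le t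
      _ ≤ (#A).choose k * m ^ t := by
          rw [sum_const, nsmul_eq_mul]
          gcongr
  obtain ⟨w, -, hw⟩ : ∃ w ∈ W, s + k * #(badIn w) < #(U w) := by
    apply exists_lt_of_sum_lt
    have hW : (#W : ℝ) = #B ^ t := by simp [W, Fintype.card_piFinset]
    have hU' : ∑ w ∈ W, (#(U w) : ℝ) = ∑ a ∈ A, (#(B.filter (r a)) : ℝ) ^ t := by
      exact_mod_cast hU
    rw [sum_add_distrib, sum_const, ← mul_sum, nsmul_eq_mul, hW, hU']
    nlinarith [mul_le_mul_of_nonneg_left hbad k.cast_nonneg]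
  set R := (badIn w).biUnion id
  have hR : #R ≤ #(badIn w) * k := card_biUnion_le_card_mul _ _ _ fun S hS =>
    (mem_powersetCard.1 (mem_filter.1 (mem_filter.1 hS).1).1).2.le
  refine ⟨U w \ R, sdiff_subset.trans (filter_subset _ _), ?_, ?_⟩
  · have := card_le_card_sdiff_add_card (s := U w) (t := R)
    have : (#(U w) : ℝ) ≤ #(U w \ R) + #(badIn w) * k := by exact_mod_cast (by omega)
    linarith
  · intro S hSU hSk
    by_contra! hlt
    obtain ⟨a, ha⟩ : S.Nonempty := card_pos.1 (hSk ▸ hk)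
    have hSbad : S ∈ badIn w := mem_filter.2 ⟨mem_filter.2 ⟨mem_powersetCard.2
      ⟨hSU.trans (sdiff_subset.trans (filter_subset _ _)), hSk⟩, hlt⟩,
      fun a ha => (mem_filter.1 (sdiff_subset (hSU ha))).2⟩
    exact (mem_sdiff.1 (hSU ha)).2 (mem_biUnion.2 ⟨S, hSbad, ha⟩)

end DependentRandomChoice

lemma mul_two_pow_le_two_pow_mul_self (k : ℕ) : k * 2 ^ k ≤ 2 ^ (k * k) := by
  rcases k with _ | j
  · simp
  calc (j + 1) * 2 ^ (j + 1) ≤ 2 ^ j * 2 ^ (j + 1) := by gcongr; exact j.lt_two_pow_self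
    _ = 2 ^ (2 * j + 1) := by ring
    _ ≤ 2 ^ ((j + 1) * (j + 1)) := Nat.pow_le_pow_right two_pos (by nlinarith)

lemma two_pow_add_mul_choose_lt {k N : ℕ} {p : ℝ} (hk : 0 < k) (hp0 : 0 < p)
    (hp : 2 ^ k * p ≤ 1) (hN1 : 1 ≤ N * p ^ 5) (hN2 : N * p ^ 5 ≤ 2) :
    2 ^ k + k * N.choose k * (p ^ 3) ^ (2 * k) < N * p ^ 2 := by
  have hsmall : k * N.choose k * (p ^ 3) ^ (2 * k) ≤ 1 :=
    calc k * N.choose k * (p ^ 3) ^ (2 * k) ≤ k * N ^ k * (p ^ 3) ^ (2 * k) := by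
          gcongr; exact_mod_cast N.choose_le_pow k
      _ = k * (N * p ^ 5) ^ k * p ^ k := by ring
      _ ≤ k * 2 ^ k * p ^ k := by gcongr
      _ ≤ 2 ^ (k * k) * p ^ k := by gcongr; exact_mod_cast mul_two_pow_le_two_pow_mul_self k
      _ = (2 ^ k * p) ^ k := by ring
      _ ≤ 1 := pow_le_one₀ (by positivity) hp
  have hlarge : (2 : ℝ) ^ (3 * k) ≤ N * p ^ 2 := by
    refine le_of_mul_le_mul_right ?_ (pow_pos hp0 3)
    calc (2 : ℝ) ^ (3 * k) * p ^ 3 = (2 ^ k * p) ^ 3 := by ring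
      _ ≤ 1 := pow_le_one₀ (by positivity) hp
      _ ≤ N * p ^ 5 := hN1
      _ = N * p ^ 2 * p ^ 3 := by ring
  have hgap : (2 : ℝ) ^ k + 1 < 2 ^ (3 * k) :=
    calc (2 : ℝ) ^ k + 1 < 2 ^ k + 2 ^ k := by gcongr; exact one_lt_pow₀ one_lt_two hk.ne'
      _ = 2 ^ (k + 1) := by ring
      _ ≤ 2 ^ (3 * k) := pow_le_pow_right₀ one_le_two (by omega)
  linarith

theorem IsTournament.exists_transitive_dominating {V : Type} {E : V → V → Prop}
    (hE : IsTournament E) {A B U : Finset V} {k : ℕ} (hUA : U ⊆ A) (hU : 2 ^ k ≤ #U + 1)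
    (hUB : ∀ S ⊆ U, #S = k → 2 ^ k ≤ #(commonNbhd E B S) + 1) :
    ∃ X ⊆ A, ∃ Y ⊆ B, #X = k ∧ #Y = k ∧
      IsTransitiveOn E X ∧ IsTransitiveOn E Y ∧ Dominates E X Y := by
  obtain ⟨X, hXU, hXk, hX⟩ := hE.exists_isTransitiveOn_subset k hU
  obtain ⟨Y, hYX, hYk, hY⟩ := hE.exists_isTransitiveOn_subset k (hUB X hXU hXk)
  exact ⟨X, hXU.trans hUA, Y, hYX.trans (filter_subset _ _), hXk, hYk, hX, hY,
    fun x hx y hy => (mem_filter.1 (hYX hy)).2 x hx⟩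

lemma exists_nat_le_one_le_mul_le_two {x : ℝ} (hx0 : 0 < x) (hx1 : x ≤ 1) {n : ℕ}
    (hn : 1 ≤ x * n) : ∃ N ≤ n, 1 ≤ N * x ∧ N * x ≤ 2 := by
  refine ⟨⌈x⁻¹⌉₊, Nat.ceil_le.2 ((inv_le_iff_one_le_mul₀' hx0).2 hn), ?_, ?_⟩
  · rw [mul_comm, ← inv_le_iff_one_le_mul₀' hx0]
    exact Nat.le_ceil _
  · calc ⌈x⁻¹⌉₊ * x ≤ (x⁻¹ + 1) * x := by gcongr; exact (Nat.ceil_lt_add_one (by positivity)).le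
      _ = 1 + x := by field_simp
      _ ≤ 2 := by linarith

theorem exists_subset_two_pow_lt_card_forall_two_pow_le_card_commonNbhd {α β : Type*}
    (r : α → β → Prop) {A : Finset α} {B : Finset β} {δ : ℝ} {k : ℕ} (hk : 0 < k)
    (hδ0 : 0 < δ) (hδ : δ ≤ 1 / 2)
    (hd : δ * ((#A : ℝ) * #B) ≤ #((A ×ˢ B).filter fun p => r p.1 p.2))
    (hA : 1 ≤ δ ^ (5 * k) * #A) (hB : 1 ≤ δ ^ (5 * k) * #B) :
    ∃ U ⊆ A, 2 ^ k < #U ∧ ∀ S ⊆ U, #S = k → 2 ^ k ≤ #(commonNbhd r B S) := by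
  set p := δ ^ k
  have hp0 : 0 < p := by positivity
  have hp : 2 ^ k * p ≤ 1 := by rw [← mul_pow]; exact pow_le_one₀ (by positivity) (by linarith)
  have hp1 : p ≤ 1 := le_trans (le_mul_of_one_le_left hp0.le (one_le_pow₀ one_le_two)) hp
  rw [mul_comm 5 k, pow_mul] at hA hB
  have hB0 : (0 : ℝ) < #B := pos_of_mul_pos_right (one_pos.trans_le hB) (by positivity)
  obtain ⟨N, hNA, hN1, hN2⟩ :=
    exists_nat_le_one_le_mul_le_two (pow_pos hp0 5) (pow_le_one₀ hp0.le hp1) hA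
  obtain ⟨A', hA'A, hA'N, hA'deg⟩ := exists_subset_card_eq_le_sum_pow r hδ0.le hd hNA (2 * k)
  have hdrc : 2 ^ k * #B ^ (2 * k) + k * (#A').choose k * (p ^ 3 * #B) ^ (2 * k) <
      ∑ a ∈ A', (#(B.filter (r a)) : ℝ) ^ (2 * k) :=
    calc _ = (2 ^ k + k * N.choose k * (p ^ 3) ^ (2 * k)) * #B ^ (2 * k) := by rw [hA'N]; ring
      _ < N * p ^ 2 * #B ^ (2 * k) := by gcongr; exact two_pow_add_mul_choose_lt hk hp0 hp hN1 hN2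
      _ = N * (δ * #B) ^ (2 * k) := by simp only [p, mul_pow, ← pow_mul]; ring_nf
      _ ≤ _ := hA'deg
  obtain ⟨U, hUA', hU, hUB⟩ :=
    exists_subset_forall_le_card_commonNbhd r hk A' B (2 * k) (2 ^ k) (by positivity) hdrc
  have hm : (2 : ℝ) ^ k ≤ p ^ 3 * #B :=
    calc (2 : ℝ) ^ k ≤ 2 ^ k * (p ^ 5 * #B) := le_mul_of_one_le_right (by positivity) hB
      _ = (2 ^ k * p) * p * (p ^ 3 * #B) := by ring
      _ ≤ 1 * 1 * (p ^ 3 * #B) := by gcongr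
      _ = p ^ 3 * #B := by ring
  exact ⟨U, hUA'.trans hA'A, by exact_mod_cast hU,
    fun S hS hSk => by exact_mod_cast hm.trans (hUB S hS hSk)⟩

theorem statement_7_general (V : Type) (E : V → V → Prop) (hT : IsTournament E)
    (A B : Finset V) (β : ℝ) (k : ℕ)
    (hβ0 : 0 < β) (hβ : β ≤ 1 / 2)
    (hd : β * ((A.card : ℝ) * (B.card : ℝ)) ≤
      (((A ×ˢ B).filter fun p => E p.1 p.2).card : ℝ))
    (hA : β ^ (-(5 * k : ℤ)) ≤ (A.card : ℝ))
    (hB : β ^ (-(5 * k : ℤ)) ≤ (B.card : ℝ)) :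
    ∃ X ⊆ A, ∃ Y ⊆ B,
      X.card = k ∧ Y.card = k ∧
      IsTransitiveOn E X ∧ IsTransitiveOn E Y ∧ Dominates E X Y := by
  rcases Nat.eq_zero_or_pos k with rfl | hk
  · exact hT.exists_transitive_dominating (empty_subset A) (by simp) (by simp)
  have hpow : β ^ (-(5 * k : ℤ)) = (β ^ (5 * k))⁻¹ := by rw [zpow_neg]; norm_cast
  rw [hpow, inv_le_iff_one_le_mul₀' (by positivity)] at hA hB
  obtain ⟨U, hUA, hU, hUB⟩ :=
    exists_subset_two_pow_lt_card_forall_two_pow_le_card_commonNbhd E hk hβ0 hβ hd hA hB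
  exact hT.exists_transitive_dominating hUA (hU.le.trans (Nat.le_succ _))
    fun S hS hSk => (hUB S hS hSk).trans (Nat.le_succ _)

/-- If `d(A,B) ≥ β` and `|A|,|B| ≥ β^(-5k)` in a tournament, then
there are transitive `k`-sets `X ⊆ A` and `Y ⊆ B` with `X ⇒ Y`. -/
theorem statement_7 (V : Type) (E : V → V → Prop) (hT : IsTournament E)
    (A B : Finset V) (hAB : Disjoint A B) (β : ℝ) (k : ℕ)
    (hβ0 : 0 < β) (hβ : β ≤ 1 / 2)
    (hd : β * ((A.card : ℝ) * (B.card : ℝ)) ≤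
      (((A ×ˢ B).filter fun p => E p.1 p.2).card : ℝ))
    (hA : β ^ (-(5 * k : ℤ)) ≤ (A.card : ℝ))
    (hB : β ^ (-(5 * k : ℤ)) ≤ (B.card : ℝ)) :
    ∃ X ⊆ A, ∃ Y ⊆ B,
      X.card = k ∧ Y.card = k ∧
      IsTransitiveOn E X ∧ IsTransitiveOn E Y ∧ Dominates E X Y :=
  statement_7_general V E hT A B β k hβ0 hβ hd hA hB
end

section
/- Let A_1, …, A_t be pairwise disjoint vertex sets, each of size at least 2^{10k}, in a tournament, and suppose there is no index i ∈ [t−1] and no sets B ⊆ A_i and B' ⊆ A_{i+1} such that B and B' each induce transitive subtournaments of size k and B' ⇒ B. Then there are sets X_i ⊆ A_i of size k, each inducing a transitive subtournament, with X_1 ⇒ X_2 ⇒ ⋯ ⇒ X_t. -/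
open Finset

attribute [local instance] Classical.propDecidable

/-!
Choose the `X_i` greedily from left to right, keeping a reservoir `D_i ⊆ A_i` with
`|D_i| ≥ 2^(3k)`. Fix a transitive `2k`-set `T ⊆ D_i` and sort the vertices of `A_{i+1}` by
their out-neighbourhood in `T`. A class whose out-neighbourhood has at least `k` vertices
contains no transitive `k`-set, since it would dominate `k` vertices of `T`; such a class has
fewer than `2^k` vertices, because every `2^k` vertices of a tournament contain a transitive
`k`-set. So the other classes cover all but `2^(3k)` vertices of `A_{i+1}`, and one of them has
`2^(3k)` vertices. Its common out-neighbourhood misses more than `k` vertices of `T`; `k` of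
them form `X_i`, which dominates the class, and the class becomes `D_{i+1}`.
-/

variable {V : Type} {E : V → V → Prop}

theorem IsTransitiveOn.mono {S B : Finset V} (h : IsTransitiveOn E S) (hBS : B ⊆ S) :
    IsTransitiveOn E B := by
  obtain ⟨f, hinj, hf⟩ := h
  exact ⟨f, hinj.mono (coe_subset.mpr hBS), fun u hu v hv => hf u (hBS hu) v (hBS hv)⟩

theorem isTransitiveOn_empty : IsTransitiveOn E ∅ :=
  ⟨fun _ => 0, by simp, by simp⟩

theorem IsTransitiveOn.insert_source {B : Finset V} {v : V} (h : IsTransitiveOn E B)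
    (hv : ∀ u ∈ insert v B, ¬ E u v) : IsTransitiveOn E (insert v B) := by
  obtain ⟨f, hinj, hf⟩ := h
  refine ⟨fun u => if u = v then 0 else f u + 1, ?_, ?_⟩
  · intro a ha b hb hab
    simp only [coe_insert, Set.mem_insert_iff, mem_coe] at ha hb
    dsimp only at hab
    split_ifs at hab with hav hbv hbv
    · rw [hav, hbv]
    · exact hinj (ha.resolve_left hav) (hb.resolve_left hbv) (Nat.succ_injective hab)
  · intro a ha b hb hab
    have hbv : b ≠ v := by rintro rfl; exact hv a ha hab
    have hb' := (mem_insert.mp hb).resolve_left hbv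
    simp only [if_neg hbv]
    split_ifs with hav
    · omega
    · exact Nat.succ_lt_succ (hf a ((mem_insert.mp ha).resolve_left hav) b hb' hab)

theorem IsTransitiveOn.insert_sink {B : Finset V} {v : V} (h : IsTransitiveOn E B)
    (hv : ∀ u ∈ insert v B, ¬ E v u) : IsTransitiveOn E (insert v B) := by
  obtain ⟨f, hinj, hf⟩ := h
  refine ⟨fun u => if u = v then B.sup f + 1 else f u, ?_, ?_⟩
  · intro a ha b hb hab
    simp only [coe_insert, Set.mem_insert_iff, mem_coe] at ha hb
    dsimp only at hab
    split_ifs at hab with hav hbv hbv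
    · rw [hav, hbv]
    · have := le_sup (f := f) (hb.resolve_left hbv); omega
    · have := le_sup (f := f) (ha.resolve_left hav); omega
    · exact hinj (ha.resolve_left hav) (hb.resolve_left hbv) hab
  · intro a ha b hb hab
    have hav : a ≠ v := by rintro rfl; exact hv b hb hab
    have ha' := (mem_insert.mp ha).resolve_left hav
    simp only [if_neg hav]
    split_ifs with hbv
    · exact Nat.lt_succ_of_le (le_sup ha')
    · exact hf a ha' b ((mem_insert.mp hb).resolve_left hbv) hab

/-- Erdős–Moser, in the weak form `2^k` rather than `2^(k-1)`: a vertex together with the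
larger of its out- and in-neighbourhoods gives the induction step. -/
theorem IsTournament.exists_transitiveOn_subset (hT : IsTournament E) :
    ∀ {k : ℕ} {S : Finset V}, 2 ^ k ≤ S.card →
      ∃ B ⊆ S, B.card = k ∧ IsTransitiveOn E B
  | 0, _, _ => ⟨∅, empty_subset _, card_empty, isTransitiveOn_empty⟩
  | k + 1, S, hS => by
    obtain ⟨v, hv⟩ := card_pos.mp (lt_of_lt_of_le (by positivity) hS)
    have hsplit := card_filter_add_card_filter_not (s := S.erase v) (E v)
    rw [card_erase_of_mem hv] at hsplit
    have hinsert : ∀ {B}, B ⊆ S.erase v → v ∉ B ∧ insert v B ⊆ S := fun hB =>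
      ⟨fun hvB => notMem_erase v S (hB hvB), insert_subset hv (hB.trans (erase_subset v S))⟩
    by_cases hout : 2 ^ k ≤ ((S.erase v).filter (E v)).card
    · obtain ⟨B, hBS, hBc, hBt⟩ := exists_transitiveOn_subset hT hout
      obtain ⟨hvB, hins⟩ := hinsert (hBS.trans (filter_subset _ _))
      refine ⟨insert v B, hins, by rw [card_insert_of_notMem hvB, hBc], hBt.insert_source ?_⟩
      intro u hu huv
      rcases mem_insert.mp hu with rfl | hu
      · exact hT.1 u huv
      · exact (hT.2 v u (ne_of_mem_of_not_mem hu hvB).symm).mp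
          (mem_filter.mp (hBS hu)).2 huv
    · obtain ⟨B, hBS, hBc, hBt⟩ :=
        exists_transitiveOn_subset hT (k := k) (S := (S.erase v).filter fun u => ¬ E v u)
          (by rw [pow_succ] at hS; omega)
      obtain ⟨hvB, hins⟩ := hinsert (hBS.trans (filter_subset _ _))
      refine ⟨insert v B, hins, by rw [card_insert_of_notMem hvB, hBc], hBt.insert_sink ?_⟩
      intro u hu
      rcases mem_insert.mp hu with rfl | hu
      · exact hT.1 u
      · exact (mem_filter.mp (hBS hu)).2

def HasBackwardPair (E : V → V → Prop) (k : ℕ) (D A' : Finset V) : Prop :=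
  ∃ B ⊆ D, ∃ B' ⊆ A', B.card = k ∧ B'.card = k ∧
    IsTransitiveOn E B ∧ IsTransitiveOn E B' ∧ Dominates E B' B

theorem HasBackwardPair.mono_left {k : ℕ} {D D₀ A' : Finset V} (hD : D ⊆ D₀)
    (h : HasBackwardPair E k D A') : HasBackwardPair E k D₀ A' := by
  obtain ⟨B, hB, rest⟩ := h
  exact ⟨B, hB.trans hD, rest⟩

theorem exists_le_card_subset_forall_filter_eq (E : V → V → Prop) (T S : Finset V) {n : ℕ}
    (h : 2 ^ T.card * n ≤ S.card) :
    ∃ P ⊆ T, ∃ F ⊆ S, n ≤ F.card ∧ ∀ v ∈ F, T.filter (E v) = P := by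
  obtain ⟨P, hP, hF⟩ := exists_le_card_fiber_of_mul_le_card_of_maps_to
    (f := fun v => T.filter (E v)) (t := T.powerset)
    (fun _ _ => mem_powerset.mpr (filter_subset _ _)) ⟨∅, empty_mem_powerset T⟩
    (by rwa [card_powerset])
  exact ⟨P, mem_powerset.mp hP, _, filter_subset _ _, hF, fun v hv => (mem_filter.mp hv).2⟩

theorem card_filter_le_card_filter_lt_of_not_hasBackwardPair (hT : IsTournament E) {k : ℕ} {T S : Finset V}
    (hTt : IsTransitiveOn E T) (hno : ¬ HasBackwardPair E k T S) :
    (S.filter fun v => k ≤ (T.filter (E v)).card).card < 2 ^ T.card * 2 ^ k := by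
  by_contra! h
  obtain ⟨P, hPT, F, hFS, hF, hFP⟩ := exists_le_card_subset_forall_filter_eq E T _ h
  obtain ⟨v, hv⟩ := card_pos.mp (lt_of_lt_of_le (by positivity) hF)
  have hkP : k ≤ P.card := hFP v hv ▸ (mem_filter.mp (hFS hv)).2
  obtain ⟨B, hBP, hBc⟩ := exists_subset_card_eq hkP
  obtain ⟨B', hB'F, hB'c, hB't⟩ := hT.exists_transitiveOn_subset hF
  refine hno ⟨B, hBP.trans hPT, B', hB'F.trans (hFS.trans (filter_subset _ _)), hBc, hB'c,
    hTt.mono (hBP.trans hPT), hB't, fun b hb x hx => ?_⟩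
  rw [← hFP b (hB'F hb)] at hBP
  exact (mem_filter.mp (hBP hx)).2

theorem two_pow_five_mul_add_two_pow_three_mul_le (k : ℕ) :
    2 ^ (5 * k) + 2 ^ (3 * k) ≤ 2 ^ (10 * k) + 1 := by
  obtain _ | k := k
  · simp
  · have h3 : 2 ^ (3 * (k + 1)) ≤ 2 ^ (5 * (k + 1)) := Nat.pow_le_pow_right two_pos (by omega)
    have h6 : 2 ^ (5 * (k + 1) + 1) ≤ 2 ^ (10 * (k + 1)) := Nat.pow_le_pow_right two_pos (by omega)
    rw [pow_succ] at h6
    omega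

theorem exists_transitiveOn_dominates_large (hT : IsTournament E) {k : ℕ} {D A' : Finset V}
    (hdisj : Disjoint D A') (hD : 2 ^ (2 * k) ≤ D.card) (hA' : 2 ^ (10 * k) ≤ A'.card)
    (hno : ¬ HasBackwardPair E k D A') :
    ∃ X ⊆ D, X.card = k ∧ IsTransitiveOn E X ∧
      ∃ D' ⊆ A', 2 ^ (3 * k) ≤ D'.card ∧ Dominates E X D' := by
  obtain ⟨T, hTD, hTc, hTt⟩ := hT.exists_transitiveOn_subset hD
  have hbad := card_filter_le_card_filter_lt_of_not_hasBackwardPair hT hTt fun h => hno (h.mono_left hTD)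
  have hgood : 2 ^ T.card * 2 ^ (3 * k) ≤
      (A'.filter fun v => ¬ k ≤ (T.filter (E v)).card).card := by
    have hsplit := card_filter_add_card_filter_not (s := A') fun v => k ≤ (T.filter (E v)).card
    have := two_pow_five_mul_add_two_pow_three_mul_le k
    rw [hTc, ← pow_add, show 2 * k + k = 3 * k by ring] at hbad
    rw [hTc, ← pow_add, show 2 * k + 3 * k = 5 * k by ring]
    omega
  obtain ⟨P, hPT, F, hFA', hF, hFP⟩ := exists_le_card_subset_forall_filter_eq E T _ hgood
  obtain ⟨v, hv⟩ := card_pos.mp (lt_of_lt_of_le (by positivity) hF)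
  have hPk : P.card < k := not_le.mp (hFP v hv ▸ (mem_filter.mp (hFA' hv)).2)
  obtain ⟨X, hXP, hXc⟩ := exists_subset_card_eq (s := T \ P) (n := k)
    (by rw [card_sdiff_of_subset hPT]; omega)
  have hXT : X ⊆ T := hXP.trans sdiff_subset
  refine ⟨X, hXT.trans hTD, hXc, hTt.mono hXT, F, hFA'.trans (filter_subset _ _), hF, ?_⟩
  intro x hx u hu
  have hxu : x ≠ u := ne_of_mem_of_not_mem (hTD (hXT hx))
    (disjoint_right.mp hdisj (mem_of_mem_filter u (hFA' hu)))
  refine (hT.2 x u hxu).mpr fun hux => (mem_sdiff.mp (hXP hx)).2 ?_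
  rw [← hFP u hu]
  exact mem_filter.mpr ⟨hXT hx, hux⟩

theorem exists_dominating_chain (hT : IsTournament E) {k : ℕ} :
    ∀ (m : ℕ) (A : ℕ → Finset V), 2 ^ (3 * k) ≤ (A 0).card →
      (∀ j < m, 2 ^ (10 * k) ≤ (A (j + 1)).card) →
      (∀ j < m, Disjoint (A j) (A (j + 1))) →
      (∀ j < m, ¬ HasBackwardPair E k (A j) (A (j + 1))) →
      ∃ X : ℕ → Finset V,
        (∀ j ≤ m, X j ⊆ A j ∧ (X j).card = k ∧ IsTransitiveOn E (X j)) ∧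
        ∀ j < m, Dominates E (X j) (X (j + 1))
  | 0, A, h0, _, _, _ => by
    obtain ⟨X, hXA, hXc, hXt⟩ := hT.exists_transitiveOn_subset
      ((Nat.pow_le_pow_right two_pos (by omega : k ≤ 3 * k)).trans h0)
    refine ⟨fun _ => X, fun j hj => ?_, fun j hj => absurd hj (Nat.not_lt_zero j)⟩
    obtain rfl : j = 0 := Nat.le_zero.mp hj
    exact ⟨hXA, hXc, hXt⟩
  | m + 1, A, h0, hsize, hdisj, hno => by
    obtain ⟨X₀, hX₀A, hX₀c, hX₀t, D, hDA, hDc, hX₀D⟩ := exists_transitiveOn_dominates_large hT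
      (hdisj 0 m.succ_pos) ((Nat.pow_le_pow_right two_pos (by omega : 2 * k ≤ 3 * k)).trans h0)
      (hsize 0 m.succ_pos) (hno 0 m.succ_pos)
    let A' : ℕ → Finset V := fun | 0 => D | j + 1 => A (j + 2)
    have hA'A : ∀ j, A' j ⊆ A (j + 1)
      | 0 => hDA
      | _ + 1 => subset_rfl
    obtain ⟨X', hX', hX'dom⟩ := exists_dominating_chain hT m A' hDc
      (fun j hj => hsize (j + 1) (by omega))
      (fun j hj => (hdisj (j + 1) (by omega)).mono_left (hA'A j))
      (fun j hj h => hno (j + 1) (by omega) (h.mono_left (hA'A j)))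
    refine ⟨fun | 0 => X₀ | j + 1 => X' j, ?_, ?_⟩
    · rintro (_ | j) hj
      · exact ⟨hX₀A, hX₀c, hX₀t⟩
      · obtain ⟨hXA, hXc, hXt⟩ := hX' j (by omega)
        exact ⟨hXA.trans (hA'A j), hXc, hXt⟩
    · rintro (_ | j) hj
      · exact fun x hx y hy => hX₀D x hx y ((hX' 0 (by omega)).1 hy)
      · exact hX'dom j (by omega)

/-- If disjoint sets `A_1,…,A_t` of size at least `2^(10k)` admit no
pair of transitive `k`-sets `B ⊆ A_i`, `B' ⊆ A_{i+1}` with `B' ⇒ B`, then there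
are transitive `k`-sets `X_i ⊆ A_i` with `X_1 ⇒ X_2 ⇒ ⋯ ⇒ X_t`. -/
theorem statement_8 (V : Type) (E : V → V → Prop) (hT : IsTournament E)
    (k t : ℕ) (A : Fin t → Finset V)
    (hdisj : ∀ i j, i ≠ j → Disjoint (A i) (A j))
    (hsize : ∀ i, 2 ^ (10 * k) ≤ (A i).card)
    (hno : ¬ ∃ (i : ℕ) (h : i + 1 < t) (B B' : Finset V),
      B ⊆ A ⟨i, Nat.lt_of_succ_lt h⟩ ∧ B' ⊆ A ⟨i + 1, h⟩ ∧
      B.card = k ∧ B'.card = k ∧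
      IsTransitiveOn E B ∧ IsTransitiveOn E B' ∧ Dominates E B' B) :
    ∃ X : Fin t → Finset V,
      (∀ i, X i ⊆ A i ∧ (X i).card = k ∧ IsTransitiveOn E (X i)) ∧
      ∀ (i : ℕ) (h : i + 1 < t),
        Dominates E (X ⟨i, Nat.lt_of_succ_lt h⟩) (X ⟨i + 1, h⟩) := by
  cases t with
  | zero => exact ⟨fun _ => ∅, fun i => i.elim0, fun i h => absurd h (by omega)⟩
  | succ m =>
    let A' : ℕ → Finset V := fun j => if h : j < m + 1 then A ⟨j, h⟩ else ∅
    have hA' : ∀ (j : ℕ) (h : j < m + 1), A' j = A ⟨j, h⟩ := fun j h => dif_pos h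
    obtain ⟨X, hX, hXdom⟩ := exists_dominating_chain hT m A'
      (hA' 0 m.succ_pos ▸ (Nat.pow_le_pow_right two_pos (by omega : 3 * k ≤ 10 * k)).trans (hsize 0))
      (fun j hj => hA' (j + 1) (by omega) ▸ hsize _)
      (fun j hj => hA' j (by omega) ▸ hA' (j + 1) (by omega) ▸
        hdisj _ _ (by simp [Fin.ext_iff]))
      (fun j hj ⟨B, hB, B', hB', rest⟩ => hno ⟨j, by omega, B, B',
        hA' j (by omega) ▸ hB, hA' (j + 1) (by omega) ▸ hB', rest⟩)
    refine ⟨fun i => X i, fun i => ?_, fun i h => hXdom i (by omega)⟩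
    rw [← hA' i i.isLt]
    exact hX i (Nat.le_of_lt_succ i.isLt)
end

section
/- Suppose that in a median ordering of a tournament T, an interval of consecutive vertices is split into consecutive subintervals A_0 ≺ A_1 ≺ ⋯ ≺ A_t, each of size m. Then every vertex v ∈ A_0 has at least ((t−2)/2)·m outneighbours in A = A_1 ∪ ⋯ ∪ A_{t−1}, and every vertex v ∈ A_t has at least ((t−2)/2)·m inneighbours in A. -/
/-!
Moving a vertex `v` of a median ordering from its position to a later position `p` (shifting
the vertices in between one step back) cannot increase the number of forward edges. Only the
edges between `v` and the vertices it jumps over change direction, so at least half of those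
vertices are out-neighbours of `v`. For `v ∈ A₀` and `p` the last position of `A_{t-1}` this
gives at least `((t - 1)m + x) / 2` out-neighbours, where `x < m` is the number of vertices
of `A₀` after `v`; at most `x` of them lie in `A₀`, leaving at least `((t - 2)/2) m` in `A`.
The claim for `A_t` is the same argument for the reversed tournament and ordering.
-/

open Finset

attribute [local instance] Classical.propDecidable

namespace Fin

variable {n : ℕ} {i j k l : Fin n}

theorem val_cycleIcc_of_ne (hk : k ≠ j) :
    (cycleIcc i j k : ℕ) = if i ≤ k ∧ k < j then (k : ℕ) + 1 else k := by
  have : NeZero n := ⟨k.pos.ne'⟩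
  rcases lt_or_ge k i with hki | hik
  · simp [cycleIcc_of_lt hki, not_le.mpr hki]
  rcases lt_or_gt_of_ne hk with hkj | hjk
  · have hk1 : ((k + 1 : Fin n) : ℕ) = k + 1 :=
      val_add_one_of_lt' (by have := lt_def.mp hkj; omega)
    simp [cycleIcc_of_ge_of_lt hik hkj, hik, hkj, hk1]
  · simp [cycleIcc_of_gt hjk, not_lt.mpr hjk.le]

theorem cycleIcc_lt_cycleIcc_iff (hk : k ≠ j) (hl : l ≠ j) :
    cycleIcc i j k < cycleIcc i j l ↔ k < l := by
  have := val_cycleIcc_of_ne (i := i) hk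
  have := val_cycleIcc_of_ne (i := i) hl
  simp only [lt_def, le_def, ne_iff_vne] at *
  split_ifs at * <;> omega

theorem cycleIcc_le_right_iff (hk : k ≠ j) : cycleIcc i j k ≤ j ↔ k < j := by
  have := val_cycleIcc_of_ne (i := i) hk
  simp only [lt_def, le_def, ne_iff_vne] at *
  split_ifs at * <;> omega

end Fin

section MedianOrder

variable {V : Type} [Fintype V] {E : V → V → Prop} {τ : V ≃ Fin (Fintype.card V)}
  {m t : ℕ} {A : ℕ → Finset V}

theorem IsMedianOrder.card_in_le_card_out (hτ : IsMedianOrder E τ) (v : V)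
    {p : Fin (Fintype.card V)} (hp : τ v ≤ p) :
    #{w | E w v ∧ τ w ∈ Ioc (τ v) p} ≤ #{w | E v w ∧ τ w ∈ Ioc (τ v) p} := by
  have : NeZero (Fintype.card V) := ⟨(τ v).pos.ne'⟩
  -- `σ` moves `v` to position `p` and shifts the vertices of `(τ v, p]` one step back.
  set c := Fin.cycleIcc (τ v) p
  set σ := τ.trans c.symm
  have hcσ (w : V) : c (σ w) = τ w := c.apply_symm_apply _
  have hσv : σ v = p := c.symm_apply_eq.mpr (Fin.cycleIcc_of_last hp).symm
  have hσne (w : V) (hw : w ≠ v) : σ w ≠ p := fun h => hw (σ.injective (h.trans hσv.symm))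
  have hσlt (u w : V) (hu : u ≠ v) (hw : w ≠ v) : σ u < σ w ↔ τ u < τ w := by
    rw [← hcσ u, ← hcσ w, Fin.cycleIcc_lt_cycleIcc_iff (hσne u hu) (hσne w hw)]
  have hσp (w : V) (hw : w ≠ v) : σ w < p ↔ τ w ≤ p := by
    rw [← hcσ w, Fin.cycleIcc_le_right_iff (hσne w hw)]
  clear_value σ
  have hsets : ({x | E x.1 x.2 ∧ σ x.1 < σ x.2} : Finset (V × V)) ∪
        {v} ×ˢ ({w | E v w ∧ τ w ∈ Ioc (τ v) p} : Finset V) =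
      ({x | E x.1 x.2 ∧ τ x.1 < τ x.2} : Finset (V × V)) ∪
        ({w | E w v ∧ τ w ∈ Ioc (τ v) p} : Finset V) ×ˢ {v} := by
    ext ⟨u, w⟩
    simp only [mem_union, mem_filter, mem_univ, true_and, mem_product, mem_singleton, mem_Ioc]
    by_cases hu : u = v <;> by_cases hw : w = v <;> grind [τ.injective.ne]
  have hcard := congrArg card hsets
  rw [card_union_of_disjoint, card_union_of_disjoint, card_product, card_product] at hcard
  · have := hτ σ
    unfold fwdCount at this
    simp only [card_singleton, one_mul, mul_one] at hcard
    omega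
  all_goals
    rw [disjoint_left]
    rintro ⟨u, w⟩
    simp only [mem_filter, mem_univ, true_and, mem_product, mem_singleton, mem_Ioc]
    grind

theorem fwdCount_flip_trans_revPerm (σ : V ≃ Fin (Fintype.card V)) :
    fwdCount (flip E) (σ.trans Fin.revPerm) = fwdCount E σ :=
  card_equiv (Equiv.prodComm V V) (by simp [flip])

theorem IsMedianOrder.flip_trans_revPerm (hτ : IsMedianOrder E τ) :
    IsMedianOrder (flip E) (τ.trans Fin.revPerm) := by
  intro σ
  have hσ : (σ.trans Fin.revPerm).trans Fin.revPerm = σ := Equiv.ext fun _ => Fin.rev_rev _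
  rw [fwdCount_flip_trans_revPerm, ← hσ, fwdCount_flip_trans_revPerm]
  exact hτ _

theorem IsMedianOrder.card_out_le_card_in (hτ : IsMedianOrder E τ) (v : V)
    {q : Fin (Fintype.card V)} (hq : q ≤ τ v) :
    #{w | E v w ∧ τ w ∈ Ico q (τ v)} ≤ #{w | E w v ∧ τ w ∈ Ico q (τ v)} := by
  have := hτ.flip_trans_revPerm.card_in_le_card_out v (p := q.rev) (by simpa using hq)
  simpa [flip, and_comm] using this

theorem IsTournament.card_le_card_out_add_card_in (hT : IsTournament E) {v : V}
    {s : Finset (Fin (Fintype.card V))} (hv : τ v ∉ s) :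
    #s ≤ #{w | E v w ∧ τ w ∈ s} + #{w | E w v ∧ τ w ∈ s} := by
  have hs : #{w | τ w ∈ s} = #s := card_equiv τ (by simp)
  have hsub : ({w | τ w ∈ s} : Finset V) ⊆
      ({w | E v w ∧ τ w ∈ s} : Finset V) ∪ ({w | E w v ∧ τ w ∈ s} : Finset V) := by
    intro w hw
    simp only [mem_filter, mem_univ, true_and, mem_union] at hw ⊢
    have hwv : w ≠ v := by rintro rfl; exact hv hw
    by_cases h : E v w
    · exact .inl ⟨h, hw⟩
    · exact .inr ⟨(hT.2 w v hwv).2 h, hw⟩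
  exact hs ▸ (card_le_card hsub).trans (card_union_le _ _)

theorem IsMedianOrder.sub_le_two_mul_card_out (hT : IsTournament E) (hτ : IsMedianOrder E τ)
    (v : V) {p : Fin (Fintype.card V)} (hp : τ v ≤ p) :
    (p : ℕ) - τ v ≤ 2 * #{w | E v w ∧ τ w ∈ Ioc (τ v) p} := by
  have := hT.card_le_card_out_add_card_in (show τ v ∉ Ioc (τ v) p by simp)
  have := hτ.card_in_le_card_out v hp
  rw [Fin.card_Ioc] at *
  omega

theorem IsMedianOrder.sub_le_two_mul_card_in (hT : IsTournament E) (hτ : IsMedianOrder E τ)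
    (v : V) {q : Fin (Fintype.card V)} (hq : q ≤ τ v) :
    (τ v : ℕ) - q ≤ 2 * #{w | E w v ∧ τ w ∈ Ico q (τ v)} := by
  have := hT.card_le_card_out_add_card_in (show τ v ∉ Ico q (τ v) by simp)
  have := hτ.card_out_le_card_in v hq
  rw [Fin.card_Ico] at *
  omega

theorem mem_biUnion_Ioo_of_interval_split {a : ℕ}
    (ha : ∀ i, 0 ≤ i → i ≤ t → ∀ w : V,
      w ∈ A i ↔ (a + i * m ≤ (τ w : ℕ) ∧ (τ w : ℕ) < a + (i + 1) * m))
    {w : V} (h₁ : a + m ≤ τ w) (h₂ : τ w < a + t * m) : w ∈ (Ioo 0 t).biUnion A := by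
  have hm : 0 < m := by nlinarith
  set i := (τ w - a : ℕ) / m
  have hi₁ : 0 < i := Nat.div_pos (by omega) hm
  have hi₂ : i < t := (Nat.div_lt_iff_lt_mul hm).2 (by omega)
  have hlo : i * m ≤ τ w - a := Nat.div_mul_le_self _ _
  have hhi : τ w - a < (i + 1) * m := by
    rw [add_mul, one_mul]; exact Nat.lt_div_mul_add hm
  exact mem_biUnion.2
    ⟨i, mem_Ioo.2 ⟨hi₁, hi₂⟩, (ha i i.zero_le hi₂.le w).2 ⟨by omega, by omega⟩⟩

theorem IsMedianOrder.card_out_interval_split (hT : IsTournament E) (hτ : IsMedianOrder E τ)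
    (hsplit : IsIntervalSplit τ m 0 t A) (hcard : #(A t) = m) {v : V} (hv : v ∈ A 0) :
    t * m ≤ 2 * #{w ∈ (Ioo 0 t).biUnion A | E v w} + 2 * m := by
  obtain ⟨a, ha⟩ := hsplit
  obtain ht | ht := le_or_gt t 2
  · have := Nat.mul_le_mul_right m ht
    omega
  have hv' := (ha 0 le_rfl t.zero_le v).1 hv
  simp only [zero_mul, zero_add, one_mul, add_zero] at hv'
  obtain ⟨u, hu⟩ := card_pos.1 (show 0 < #(A t) by omega)
  have hu' := (ha t t.zero_le le_rfl u).1 hu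
  have htm : m + m ≤ t * m := by nlinarith
  have hn := (τ u).isLt
  have hp : τ v ≤ ⟨a + t * m - 1, by omega⟩ := by rw [Fin.le_def]; dsimp; omega
  have hout := hτ.sub_le_two_mul_card_out hT v hp
  have hsub : ({w | E v w ∧ τ w ∈ Ioc (τ v) ⟨a + t * m - 1, by omega⟩} : Finset V) ⊆
      ({w ∈ (Ioo 0 t).biUnion A | E v w} : Finset V) ∪
        ({w | τ w ∈ Ioc (τ v) ⟨a + m - 1, by omega⟩} : Finset V) := by
    intro w hw
    simp only [mem_filter, mem_univ, true_and, mem_union, mem_Ioc, Fin.lt_def, Fin.le_def] at hw ⊢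
    by_cases hw' : (τ w : ℕ) ≤ a + m - 1
    · exact .inr ⟨hw.2.1, hw'⟩
    · exact .inl ⟨mem_biUnion_Ioo_of_interval_split ha (by omega) (by omega), hw.1⟩
  have hfirst :
      #({w | τ w ∈ Ioc (τ v) ⟨a + m - 1, by omega⟩} : Finset V) = a + m - 1 - τ v := by
    rw [card_equiv τ (t := Ioc (τ v) ⟨a + m - 1, by omega⟩) (by simp), Fin.card_Ioc]
  have := (card_le_card hsub).trans (card_union_le _ _)
  dsimp at hout
  omega

theorem IsMedianOrder.card_in_interval_split (hT : IsTournament E) (hτ : IsMedianOrder E τ)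
    (hsplit : IsIntervalSplit τ m 0 t A) {v : V} (hv : v ∈ A t) :
    t * m ≤ 2 * #{w ∈ (Ioo 0 t).biUnion A | E w v} + 2 * m := by
  obtain ⟨a, ha⟩ := hsplit
  obtain ht | ht := le_or_gt t 2
  · have := Nat.mul_le_mul_right m ht
    omega
  have hv' := (ha t t.zero_le le_rfl v).1 hv
  rw [add_mul, one_mul] at hv'
  have htm : m + m ≤ t * m := by nlinarith
  have hn := (τ v).isLt
  have hq : ⟨a + m, by omega⟩ ≤ τ v := by rw [Fin.le_def]; dsimp; omega
  have hin := hτ.sub_le_two_mul_card_in hT v hq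
  have hsub : ({w | E w v ∧ τ w ∈ Ico ⟨a + m, by omega⟩ (τ v)} : Finset V) ⊆
      ({w ∈ (Ioo 0 t).biUnion A | E w v} : Finset V) ∪
        ({w | τ w ∈ Ico ⟨a + t * m, by omega⟩ (τ v)} : Finset V) := by
    intro w hw
    simp only [mem_filter, mem_univ, true_and, mem_union, mem_Ico, Fin.lt_def, Fin.le_def] at hw ⊢
    by_cases hw' : a + t * m ≤ (τ w : ℕ)
    · exact .inr ⟨hw', hw.2.2⟩
    · exact .inl ⟨mem_biUnion_Ioo_of_interval_split ha (by omega) (by omega), hw.1⟩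
  have hlast :
      #({w | τ w ∈ Ico ⟨a + t * m, by omega⟩ (τ v)} : Finset V) = τ v - (a + t * m) := by
    rw [card_equiv τ (t := Ico ⟨a + t * m, by omega⟩ (τ v)) (by simp), Fin.card_Ico]
  have := (card_le_card hsub).trans (card_union_le _ _)
  dsimp at hin
  omega

end MedianOrder

theorem sub_two_div_two_mul_le_of_mul_le {t m k : ℕ} (h : t * m ≤ 2 * k + 2 * m) :
    ((t : ℝ) - 2) / 2 * m ≤ k := by
  have : (t : ℝ) * m ≤ 2 * k + 2 * m := by exact_mod_cast h
  linarith

/-- In a median ordering, for an interval split into subintervals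
`A_0 ≺ ⋯ ≺ A_t` of size `m`, every vertex of `A_0` has at least `((t-2)/2)m`
outneighbours in `A_1 ∪ ⋯ ∪ A_{t-1}`, and every vertex of `A_t` has at least
`((t-2)/2)m` inneighbours there. -/
theorem statement_9 (V : Type) [Fintype V] (E : V → V → Prop) (hT : IsTournament E)
    (τ : V ≃ Fin (Fintype.card V)) (hτ : IsMedianOrder E τ)
    (t m : ℕ) (A : ℕ → Finset V)
    (hsplit : IsIntervalSplit τ m 0 t A)
    (hsize : ∀ i ≤ t, (A i).card = m) :
    (∀ v ∈ A 0, ((t : ℝ) - 2) / 2 * (m : ℝ) ≤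
      (((((Finset.Ioo 0 t).biUnion A).filter fun w => E v w).card : ℝ))) ∧
    (∀ v ∈ A t, ((t : ℝ) - 2) / 2 * (m : ℝ) ≤
      (((((Finset.Ioo 0 t).biUnion A).filter fun w => E w v).card : ℝ))) :=
  ⟨fun _ hv => sub_two_div_two_mul_le_of_mul_le
      (hτ.card_out_interval_split hT hsplit (hsize t le_rfl) hv),
    fun _ hv => sub_two_div_two_mul_le_of_mul_le (hτ.card_in_interval_split hT hsplit hv)⟩
end

section
/- Let 0 < ε ≤ 1/4 and let T be an ε-intransitive tournament on n vertices. Then for every 0 < c < 1/3, at least one of the following holds: (P1) in every median ordering τ of T there is a set E_τ of backward edges with |E_τ| ≥ cεn²/4 such that every edge e ∈ E_τ has length len_τ(e) ≥ cn/4; or (P2) there is a subtournament T' ⊆ T on at least n/2 vertices that is 2(1−c)ε-intransitive. -/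
/-!
Suppose both alternatives fail, and fix a median order `τ` of the `n`-vertex tournament. Fewer
than `cεn²/4` backward edges have length at least `cn/4`, so more than `(1 - c/4)εn²` are short.
Cover the positions by the `n` cyclic windows of `h = ⌈n/2⌉` consecutive positions. A short
backward edge does not cross the wrap-around point, so it lies in one of the two `τ`-intervals
making up a window; as a median order stays median on each of its intervals and no window spans
a `2(1 - c)ε`-intransitive subtournament, every window contains fewer than `2(1 - c)εh²` short
backward edges. An edge of length `ℓ` lies in at least `h - ℓ` windows, and double counting
gives `(1 - c/4)εn² (h - cn/4) < 2(1 - c)εnh²`, which is false once `cn > 8`. Finally `cn > 8`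
because a median order has no backward edge of length `1` (swapping its ends would gain an
edge), so a short backward edge has length `2 ≤ ℓ < cn/4`.
-/

open Finset

attribute [local instance] Classical.propDecidable

section EdgesOn

variable {V : Type} {α : Type*} [LinearOrder α] (E : V → V → Prop)

noncomputable def fwdEdgesOn (r : V → α) (S : Finset V) : Finset (V × V) :=
  (S ×ˢ S).filter fun p => E p.1 p.2 ∧ r p.1 < r p.2

noncomputable def backEdgesOn (r : V → α) (S : Finset V) : Finset (V × V) :=
  (S ×ˢ S).filter fun p => E p.1 p.2 ∧ r p.2 < r p.1

variable {E}

@[simp]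
lemma mem_fwdEdgesOn {r : V → α} {S : Finset V} {p : V × V} :
    p ∈ fwdEdgesOn E r S ↔ p.1 ∈ S ∧ p.2 ∈ S ∧ E p.1 p.2 ∧ r p.1 < r p.2 := by
  simp [fwdEdgesOn, and_assoc]

@[simp]
lemma mem_backEdgesOn {r : V → α} {S : Finset V} {p : V × V} :
    p ∈ backEdgesOn E r S ↔ p.1 ∈ S ∧ p.2 ∈ S ∧ E p.1 p.2 ∧ r p.2 < r p.1 := by
  simp [backEdgesOn, and_assoc]

lemma backEdgesOn_mono {r : V → α} {S T : Finset V} (hST : S ⊆ T) :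
    backEdgesOn E r S ⊆ backEdgesOn E r T := fun p hp => by
  simp only [mem_backEdgesOn] at hp ⊢
  exact ⟨hST hp.1, hST hp.2.1, hp.2.2⟩

lemma card_backEdgesOn_add_card_backEdgesOn_le {r : V → α} {S T : Finset V}
    (hST : Disjoint S T) :
    #(backEdgesOn E r S) + #(backEdgesOn E r T) ≤ #(backEdgesOn E r (S ∪ T)) := by
  rw [← card_union_of_disjoint]
  · exact card_le_card (union_subset (backEdgesOn_mono subset_union_left)
      (backEdgesOn_mono subset_union_right))
  · exact disjoint_left.2 fun p hpS hpT =>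
      disjoint_left.1 hST (mem_backEdgesOn.1 hpS).1 (mem_backEdgesOn.1 hpT).1

lemma card_fwdEdgesOn_add_card_backEdgesOn (hE : ∀ v, ¬ E v v) {r : V → α} {S : Finset V}
    (hr : Set.InjOn r S) :
    #(fwdEdgesOn E r S) + #(backEdgesOn E r S) = #((S ×ˢ S).filter fun p => E p.1 p.2) := by
  rw [← card_union_of_disjoint]
  · congr 1
    ext ⟨u, v⟩
    simp only [mem_union, mem_fwdEdgesOn, mem_backEdgesOn, mem_filter, mem_product]
    constructor
    · rintro (⟨hu, hv, huv, -⟩ | ⟨hu, hv, huv, -⟩) <;> exact ⟨⟨hu, hv⟩, huv⟩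
    · rintro ⟨⟨hu, hv⟩, huv⟩
      have hne : r u ≠ r v := fun h => hE v (hr hu hv h ▸ huv)
      rcases hne.lt_or_gt with h | h
      · exact Or.inl ⟨hu, hv, huv, h⟩
      · exact Or.inr ⟨hu, hv, huv, h⟩
  · exact disjoint_left.2 fun p hf hb =>
      lt_asymm (mem_fwdEdgesOn.1 hf).2.2.2 (mem_backEdgesOn.1 hb).2.2.2

lemma fwdEdgesOn_congr {r : V → α} {β : Type*} [LinearOrder β] {r' : V → β} {S : Finset V}
    (h : ∀ u ∈ S, ∀ v ∈ S, r u < r v ↔ r' u < r' v) :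
    fwdEdgesOn E r S = fwdEdgesOn E r' S := by
  ext p
  simp only [mem_fwdEdgesOn]
  constructor
  · rintro ⟨hu, hv, huv, hlt⟩
    exact ⟨hu, hv, huv, (h _ hu _ hv).1 hlt⟩
  · rintro ⟨hu, hv, huv, hlt⟩
    exact ⟨hu, hv, huv, (h _ hu _ hv).2 hlt⟩

lemma card_fwdEdgesOn_univ [Fintype V] (r : V → α) (S : Finset V) :
    #(fwdEdgesOn E r univ) = #(fwdEdgesOn E r S)
      + #((fwdEdgesOn E r univ).filter fun p => ¬ (p.1 ∈ S ∧ p.2 ∈ S)) := by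
  rw [← card_filter_add_card_filter_not (fun p : V × V => p.1 ∈ S ∧ p.2 ∈ S)]
  congr 2
  ext p
  simp only [mem_filter, mem_fwdEdgesOn, mem_univ, true_and]
  tauto

end EdgesOn

section Orderings

variable {V : Type} {E : V → V → Prop}

lemma fwdCount_eq_card_fwdEdgesOn [Fintype V] (σ : V ≃ Fin (Fintype.card V)) :
    fwdCount E σ = #(fwdEdgesOn E σ univ) := by
  unfold fwdCount fwdEdgesOn
  rw [univ_product_univ]
  congr 1
  ext p
  simp only [mem_filter]

lemma backCount_eq_card_backEdgesOn [Fintype V] (σ : V ≃ Fin (Fintype.card V)) :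
    backCount E σ = #(backEdgesOn E σ univ) := by
  unfold backCount backEdgesOn
  rw [univ_product_univ]
  congr 1
  ext p
  simp only [mem_filter]

lemma exists_equiv_fin_lt_iff [Fintype V] {α : Type*} [LinearOrder α] {g : V → α}
    (hg : Function.Injective g) :
    ∃ σ : V ≃ Fin (Fintype.card V), ∀ u v, σ u < σ v ↔ g u < g v := by
  let := LinearOrder.lift' g hg
  exact ⟨(Fintype.orderIsoFinOfCardEq V rfl).symm.toEquiv,
    fun _ _ => (Fintype.orderIsoFinOfCardEq V rfl).symm.lt_iff_lt⟩

lemma exists_injOn_card_backEdgesOn_lt {W : Finset V} {δ : ℝ}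
    (hW : ¬ IsIntransitive (fun u v : W => E u v) δ) :
    ∃ f : V → ℕ, Set.InjOn f W ∧ (#(backEdgesOn E f W) : ℝ) < δ * (#W : ℝ) ^ 2 := by
  simp only [IsIntransitive, Fintype.card_coe, not_forall, not_le] at hW
  obtain ⟨σ, hσ⟩ := hW
  set f : V → ℕ := fun v => if hv : v ∈ W then σ ⟨v, hv⟩ else 0
  have hf : ∀ v (hv : v ∈ W), f v = σ ⟨v, hv⟩ := fun v hv => dif_pos hv
  refine ⟨f, fun u hu v hv huv => ?_, ?_⟩
  · rw [hf u hu, hf v hv] at huv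
    exact congrArg Subtype.val (σ.injective (Fin.ext huv))
  · suffices #(backEdgesOn E f W) = backCount (fun u v : W => E u v) σ by rwa [this]
    rw [backCount_eq_card_backEdgesOn]
    symm
    refine card_bij (fun p _ => (p.1.1, p.2.1)) (fun p hp => ?_) (fun p _ q _ h => ?_)
      (fun p hp => ?_)
    · simp only [mem_backEdgesOn, mem_univ, true_and] at hp ⊢
      rw [hf _ p.1.2, hf _ p.2.2]
      exact ⟨p.1.2, p.2.2, hp.1, hp.2⟩
    · simp only [Prod.mk.injEq] at h
      exact Prod.ext (Subtype.ext h.1) (Subtype.ext h.2)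
    · simp only [mem_backEdgesOn] at hp
      obtain ⟨hu, hv, huv, hlt⟩ := hp
      refine ⟨(⟨p.1, hu⟩, ⟨p.2, hv⟩), ?_, rfl⟩
      simp only [mem_backEdgesOn, mem_univ, true_and]
      rw [hf _ hu, hf _ hv] at hlt
      exact ⟨huv, hlt⟩

end Orderings

/-- Two positions `x ≤ y` lie together in at least `h - (y - x)` of the `n` cyclic windows of
length `h`: those starting at `x - j` (mod `n`) for `j < h - (y - x)`. -/
lemma sub_le_card_filter_windows {n h x y : ℕ} (hxy : x ≤ y) (hy : y < n) (hh : h ≤ n) :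
    h - (y - x) ≤ #((range n).filter fun s =>
      (s ≤ x ∧ x < s + h ∨ x < s + h - n) ∧ (s ≤ y ∧ y < s + h ∨ y < s + h - n)) := by
  rw [← card_range (h - (y - x))]
  refine card_le_card_of_injOn (fun j => if j ≤ x then x - j else x + n - j)
    (fun j hj => ?_) (fun j₁ hj₁ j₂ hj₂ hj => ?_)
  · simp only [coe_range, Set.mem_Iio] at hj
    simp only [coe_filter, mem_range, Set.mem_ofPred_eq]
    split_ifs <;> omega
  · simp only [coe_range, Set.mem_Iio] at hj₁ hj₂
    simp only at hj
    split_ifs at hj <;> omega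

lemma two_mul_one_sub_mul_sq_le {n h c : ℝ} (hc0 : 0 < c) (hc : c < 1 / 3) (hcn : 8 < c * n)
    (h1 : n ≤ 2 * h) (h2 : 2 * h ≤ n + 1) :
    2 * n * (1 - c) * h ^ 2 ≤ (1 - c / 4) * n ^ 2 * (h - c * n / 4) := by
  have hn : 0 < n := by nlinarith
  have hA0 : 0 ≤ 2 * h - n := by linarith
  have hA1 : 0 ≤ 1 - (2 * h - n) := by linarith
  have h8n : 8 * n ≤ c * n * n := by nlinarith
  have h64 : 64 ≤ (c * n) ^ 2 := by nlinarith
  nlinarith [mul_nonneg hA0 hA1, mul_nonneg (mul_nonneg hA0 hA1) hn.le,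
    mul_nonneg (mul_nonneg hA0 hn.le) hc0.le,
    mul_nonneg (mul_nonneg (mul_nonneg hA0 hA0) hc0.le) hn.le,
    mul_nonneg (mul_nonneg hA0 hc0.le) hn.le, mul_nonneg (mul_nonneg hA0 hA0) hc0.le]

section MedianOrder

variable {V : Type} [Fintype V] {E : V → V → Prop} {τ : V ≃ Fin (Fintype.card V)}

noncomputable def posIn (τ : V ≃ Fin (Fintype.card V)) (a b : ℕ) : Finset V :=
  univ.filter fun v => a ≤ (τ v : ℕ) ∧ (τ v : ℕ) < b

@[simp]
lemma mem_posIn {a b : ℕ} {v : V} :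
    v ∈ posIn τ a b ↔ a ≤ (τ v : ℕ) ∧ (τ v : ℕ) < b := by
  simp [posIn]

lemma card_posIn (a b : ℕ) : #(posIn τ a b) = min b (Fintype.card V) - a := by
  rw [← Nat.card_Ico]
  refine card_nbij (fun v => (τ v : ℕ)) (fun v hv => ?_) (fun u _ v _ h => ?_) (fun m hm => ?_)
  · simp only [mem_coe, mem_posIn, mem_Ico] at hv ⊢
    exact ⟨hv.1, lt_min hv.2 (τ v).isLt⟩
  · exact τ.injective (Fin.ext h)
  · simp only [mem_coe, mem_Ico, lt_min_iff] at hm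
    exact ⟨τ.symm ⟨m, hm.2.2⟩, by simp [hm.1, hm.2.1], by simp⟩

/-- Reordering the vertices of a `τ`-interval among themselves does not change the position of any
edge leaving the interval, so a median order is also a median order on each of its intervals. -/
theorem IsMedianOrder.card_backEdgesOn_posIn_le (hτ : IsMedianOrder E τ) (hE : ∀ v, ¬ E v v)
    (a b : ℕ) {f : V → ℕ} (hf : Set.InjOn f (posIn τ a b)) :
    #(backEdgesOn E τ (posIn τ a b)) ≤ #(backEdgesOn E f (posIn τ a b)) := by
  set I := posIn τ a b
  let g : V → ℕ ×ₗ ℕ := fun v =>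
    if v ∈ I then toLex (a, f v) else toLex ((τ v : ℕ), 0)
  have hg : Function.Injective g := by
    intro u v huv
    by_cases hu : u ∈ I <;> by_cases hv : v ∈ I <;>
      simp only [g, hu, hv, if_true, if_false, EmbeddingLike.apply_eq_iff_eq, Prod.mk.injEq]
        at huv
    · exact hf hu hv huv.2
    · exact (hv (mem_posIn.2 (by have := mem_posIn.1 hu; omega))).elim
    · exact (hu (mem_posIn.2 (by have := mem_posIn.1 hv; omega))).elim
    · exact τ.injective (Fin.ext huv.1)
  obtain ⟨σ, hσ⟩ := exists_equiv_fin_lt_iff hg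
  have hin : ∀ u ∈ I, ∀ v ∈ I, σ u < σ v ↔ f u < f v := fun u hu v hv => by
    simp [hσ, g, hu, hv, Prod.Lex.toLex_lt_toLex]
  have hout : ∀ u v, ¬ (u ∈ I ∧ v ∈ I) → (σ u < σ v ↔ τ u < τ v) := by
    intro u v huv
    simp only [I, mem_posIn] at huv
    simp only [hσ, g, I, mem_posIn, Fin.lt_def]
    split_ifs <;> simp only [Prod.Lex.toLex_lt_toLex] <;> omega
  have hfwd : #(fwdEdgesOn E f I) ≤ #(fwdEdgesOn E τ I) := by
    have hsame : (fwdEdgesOn E σ univ).filter (fun p => ¬ (p.1 ∈ I ∧ p.2 ∈ I))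
        = (fwdEdgesOn E τ univ).filter (fun p => ¬ (p.1 ∈ I ∧ p.2 ∈ I)) := by
      ext p
      simp only [mem_filter, mem_fwdEdgesOn, mem_univ, true_and]
      constructor
      · rintro ⟨⟨huv, hlt⟩, hp⟩
        exact ⟨⟨huv, (hout _ _ hp).1 hlt⟩, hp⟩
      · rintro ⟨⟨huv, hlt⟩, hp⟩
        exact ⟨⟨huv, (hout _ _ hp).2 hlt⟩, hp⟩
    have hστ := hτ σ
    rw [fwdCount_eq_card_fwdEdgesOn, fwdCount_eq_card_fwdEdgesOn, card_fwdEdgesOn_univ _ I,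
      card_fwdEdgesOn_univ _ I, fwdEdgesOn_congr hin, hsame] at hστ
    omega
  have hsumf := card_fwdEdgesOn_add_card_backEdgesOn hE hf
  have hsumτ := card_fwdEdgesOn_add_card_backEdgesOn hE (τ.injective.injOn (s := (I : Set V)))
  omega

theorem IsMedianOrder.add_two_le_of_mem_backEdgesOn (hτ : IsMedianOrder E τ)
    (hT : IsTournament E) {p : V × V} (hp : p ∈ backEdgesOn E τ univ) :
    (τ p.2 : ℕ) + 2 ≤ τ p.1 := by
  obtain ⟨-, -, hE, hlt⟩ := mem_backEdgesOn.1 hp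
  rw [Fin.lt_def] at hlt
  by_contra! hadj
  set x := (τ p.2 : ℕ)
  set I := posIn τ x (x + 2)
  -- Reversing the two vertices of `I` would turn the backward edge `p` forward.
  have hf : Set.InjOn (fun w => x + 2 - (τ w : ℕ)) I := fun u hu v hv h => by
    simp only [I, mem_coe, mem_posIn] at hu hv h
    exact τ.injective (Fin.ext (by omega))
  have hempty : backEdgesOn E (fun w => x + 2 - (τ w : ℕ)) I = ∅ := by
    refine eq_empty_of_forall_notMem fun q hq => ?_
    obtain ⟨hq1, hq2, hEq, hqlt⟩ := mem_backEdgesOn.1 hq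
    simp only [I, mem_posIn] at hq1 hq2 hqlt
    have h1 : q.1 = p.2 := τ.injective (Fin.ext (by omega))
    have h2 : q.2 = p.1 := τ.injective (Fin.ext (by omega))
    have hne : p.1 ≠ p.2 := fun h => hT.1 _ (h ▸ hE)
    exact (hT.2 _ _ hne).1 hE (h1 ▸ h2 ▸ hEq)
  have hpI : p ∈ backEdgesOn E τ I :=
    mem_backEdgesOn.2 ⟨mem_posIn.2 (by omega), mem_posIn.2 (by omega), hE, Fin.lt_def.2 hlt⟩
  have hle := hτ.card_backEdgesOn_posIn_le hT.1 x (x + 2) hf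
  rw [hempty, card_empty, Nat.le_zero, card_eq_zero] at hle
  exact notMem_empty p (hle ▸ hpI)

/-- The cyclic interval of `h` consecutive positions starting at `s`, positions read modulo
`Fintype.card V`. -/
noncomputable def window (τ : V ≃ Fin (Fintype.card V)) (h s : ℕ) : Finset V :=
  posIn τ s (s + h) ∪ posIn τ 0 (s + h - Fintype.card V)

lemma mem_window {h s : ℕ} {v : V} :
    v ∈ window τ h s ↔
      s ≤ (τ v : ℕ) ∧ (τ v : ℕ) < s + h ∨ (τ v : ℕ) < s + h - Fintype.card V := by
  simp [window]

lemma card_window {h s : ℕ} (hs : s < Fintype.card V) (hh : h ≤ Fintype.card V) :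
    #(window τ h s) = h := by
  rw [window, card_union_of_disjoint, card_posIn, card_posIn]
  · omega
  · exact disjoint_left.2 fun v hv₁ hv₂ => by
      rw [mem_posIn] at hv₁ hv₂
      omega

/-- A backward edge of length at most `|V| - h` cannot jump across the wrap-around point, so it
lies in one of the two `τ`-intervals making up the window. -/
theorem IsMedianOrder.card_filter_backEdgesOn_window_le (hτ : IsMedianOrder E τ)
    (hE : ∀ v, ¬ E v v) {h s : ℕ} (hh : h ≤ Fintype.card V) {f : V → ℕ}
    (hf : Set.InjOn f (window τ h s)) :
    #((backEdgesOn E τ (window τ h s)).filter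
        fun p => (τ p.1 : ℕ) ≤ τ p.2 + (Fintype.card V - h)) ≤
      #(backEdgesOn E f (window τ h s)) := by
  set I₁ := posIn τ s (s + h)
  set I₂ := posIn τ 0 (s + h - Fintype.card V)
  have hdisj : Disjoint I₁ I₂ := disjoint_left.2 fun v hv₁ hv₂ => by
    simp only [I₁, I₂, mem_posIn] at hv₁ hv₂
    omega
  have hsplit : (backEdgesOn E τ (window τ h s)).filter
      (fun p => (τ p.1 : ℕ) ≤ τ p.2 + (Fintype.card V - h)) ⊆
        backEdgesOn E τ I₁ ∪ backEdgesOn E τ I₂ := fun p hp => by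
    obtain ⟨hp₁, hp₂, hEp, hlt⟩ := mem_backEdgesOn.1 (mem_filter.1 hp).1
    have hshort := (mem_filter.1 hp).2
    have hpos : (p.1 ∈ I₁ ∧ p.2 ∈ I₁) ∨ (p.1 ∈ I₂ ∧ p.2 ∈ I₂) := by
      simp only [I₁, I₂, mem_window, mem_posIn] at hp₁ hp₂ ⊢
      rw [Fin.lt_def] at hlt
      omega
    rw [mem_union, mem_backEdgesOn, mem_backEdgesOn]
    rcases hpos with ⟨h₁, h₂⟩ | ⟨h₁, h₂⟩
    exacts [Or.inl ⟨h₁, h₂, hEp, hlt⟩, Or.inr ⟨h₁, h₂, hEp, hlt⟩]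
  calc _ ≤ #(backEdgesOn E τ I₁ ∪ backEdgesOn E τ I₂) := card_le_card hsplit
    _ ≤ #(backEdgesOn E τ I₁) + #(backEdgesOn E τ I₂) := card_union_le _ _
    _ ≤ #(backEdgesOn E f I₁) + #(backEdgesOn E f I₂) :=
      add_le_add (hτ.card_backEdgesOn_posIn_le hE _ _ (hf.mono subset_union_left))
        (hτ.card_backEdgesOn_posIn_le hE _ _ (hf.mono subset_union_right))
    _ ≤ #(backEdgesOn E f (window τ h s)) := card_backEdgesOn_add_card_backEdgesOn_le hdisj

/-- Double counting the pairs (edge of `S`, window containing it): each edge lies in at least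
`h - L` windows, and each window contains fewer than `B` edges of `S`. -/
theorem IsMedianOrder.card_mul_lt_of_sparse_windows (hτ : IsMedianOrder E τ)
    (hE : ∀ v, ¬ E v v) {h : ℕ} (hh : h ≤ Fintype.card V) (hn : 0 < Fintype.card V)
    {B L : ℝ} (hsparse : ∀ s < Fintype.card V, ∃ f : V → ℕ,
      Set.InjOn f (window τ h s) ∧ (#(backEdgesOn E f (window τ h s)) : ℝ) < B)
    (hL : L ≤ (Fintype.card V - h : ℕ)) {S : Finset (V × V)} (hS : S ⊆ backEdgesOn E τ univ)
    (hshort : ∀ p ∈ S, ((τ p.1 : ℕ) : ℝ) - (τ p.2 : ℕ) < L) :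
    #S * (h - L) < Fintype.card V * B := by
  let r : V × V → ℕ → Prop := fun p s => p.2 ∈ window τ h s ∧ p.1 ∈ window τ h s
  set starts := range (Fintype.card V)
  have hcover : ∀ p ∈ S, (h : ℝ) - L ≤ #(starts.bipartiteAbove r p) := fun p hp => by
    have hlt := Fin.lt_def.1 (mem_backEdgesOn.1 (hS hp)).2.2.2
    have hcount : h ≤ #(starts.bipartiteAbove r p) + ((τ p.1 : ℕ) - τ p.2) := by
      have := sub_le_card_filter_windows hlt.le (τ p.1).isLt hh
      simp only [← mem_window] at this
      exact Nat.le_add_of_sub_le this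
    have hcast :
        (h : ℝ) ≤ #(starts.bipartiteAbove r p) + (((τ p.1 : ℕ) : ℝ) - (τ p.2 : ℕ)) := by
      rw [← Nat.cast_sub hlt.le]
      exact_mod_cast hcount
    linarith [hshort p hp]
  have hwindow : ∀ s ∈ starts, (#(S.bipartiteBelow r s) : ℝ) < B := fun s hs => by
    obtain ⟨f, hf, hB⟩ := hsparse s (mem_range.1 hs)
    refine lt_of_le_of_lt ?_ hB
    rw [Nat.cast_le]
    refine (card_le_card fun p hp => ?_).trans (hτ.card_filter_backEdgesOn_window_le hE hh hf)
    obtain ⟨hpS, hp₂, hp₁⟩ := mem_filter.1 hp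
    obtain ⟨-, -, hEp, hlt⟩ := mem_backEdgesOn.1 (hS hpS)
    have hlen : ((τ p.1 : ℕ) : ℝ) < (τ p.2 + (Fintype.card V - h) : ℕ) := by
      push_cast
      linarith [hshort p hpS]
    exact mem_filter.2 ⟨mem_backEdgesOn.2 ⟨hp₁, hp₂, hEp, hlt⟩, (Nat.cast_lt.1 hlen).le⟩
  calc (#S : ℝ) * (h - L) = ∑ _p ∈ S, ((h : ℝ) - L) := by rw [sum_const, nsmul_eq_mul]
    _ ≤ ∑ p ∈ S, (#(starts.bipartiteAbove r p) : ℝ) := sum_le_sum hcover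
    _ = ∑ s ∈ starts, (#(S.bipartiteBelow r s) : ℝ) := by
      exact_mod_cast sum_card_bipartiteAbove_eq_sum_card_bipartiteBelow r
    _ < ∑ _s ∈ starts, B := sum_lt_sum_of_nonempty (nonempty_range_iff.2 hn.ne') hwindow
    _ = Fintype.card V * B := by rw [sum_const, card_range, nsmul_eq_mul]

lemma exists_injOn_card_backEdgesOn_window_lt {δ : ℝ} (τ : V ≃ Fin (Fintype.card V))
    (hsparse : ¬ ∃ W : Finset V, (Fintype.card V : ℝ) / 2 ≤ #W ∧
      IsIntransitive (fun u v : W => E u v) δ)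
    {s : ℕ} (hs : s < Fintype.card V) :
    ∃ f : V → ℕ, Set.InjOn f (window τ (Fintype.card V - Fintype.card V / 2) s) ∧
      (#(backEdgesOn E f (window τ (Fintype.card V - Fintype.card V / 2) s)) : ℝ) <
        δ * ((Fintype.card V - Fintype.card V / 2 : ℕ) : ℝ) ^ 2 := by
  have hcard := card_window (τ := τ) hs (Nat.sub_le (Fintype.card V) (Fintype.card V / 2))
  have hhalf : (Fintype.card V : ℝ) / 2 ≤
      #(window τ (Fintype.card V - Fintype.card V / 2) s) := by
    rw [hcard, div_le_iff₀ two_pos]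
    exact_mod_cast (by omega : Fintype.card V ≤ (Fintype.card V - Fintype.card V / 2) * 2)
  obtain ⟨f, hf, hlt⟩ := exists_injOn_card_backEdgesOn_lt fun hW => hsparse ⟨_, hhalf, hW⟩
  rw [hcard] at hlt
  exact ⟨f, hf, hlt⟩

theorem IsMedianOrder.card_short_backEdgesOn_le (hτ : IsMedianOrder E τ) (hT : IsTournament E)
    {ε c : ℝ} (hε0 : 0 < ε) (hc0 : 0 < c) (hc : c < 1 / 3)
    (hsparse : ¬ ∃ W : Finset V, (Fintype.card V : ℝ) / 2 ≤ #W ∧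
      IsIntransitive (fun u v : W => E u v) (2 * (1 - c) * ε)) :
    (#((backEdgesOn E τ univ).filter fun p =>
        ((τ p.1 : ℕ) : ℝ) - (τ p.2 : ℕ) < c * Fintype.card V / 4) : ℝ) ≤
      ε * Fintype.card V ^ 2 * (1 - c / 4) := by
  set N : ℝ := (Fintype.card V : ℝ)
  set Short := (backEdgesOn E τ univ).filter fun p =>
    ((τ p.1 : ℕ) : ℝ) - (τ p.2 : ℕ) < c * N / 4
  by_contra! hshort
  obtain ⟨p, hp⟩ : Short.Nonempty := card_pos.1 <| by
    have : 0 ≤ ε * N ^ 2 * (1 - c / 4) := mul_nonneg (by positivity) (by linarith)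
    exact_mod_cast this.trans_lt hshort
  have hcN : 8 < c * N := by
    have h2 : ((τ p.2 : ℕ) : ℝ) + 2 ≤ (τ p.1 : ℕ) := by
      exact_mod_cast hτ.add_two_le_of_mem_backEdgesOn hT (filter_subset _ _ hp)
    linarith [(mem_filter.1 hp).2]
  set h := Fintype.card V - Fintype.card V / 2
  have hh : N ≤ 2 * h ∧ 2 * h ≤ N + 1 := by
    simp only [N, h]
    constructor <;> norm_cast <;> omega
  have hL : c * N / 4 ≤ (Fintype.card V - h : ℕ) := by
    have : N ≤ 2 * ((Fintype.card V - h : ℕ) : ℝ) + 1 := by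
      simp only [N, h]
      norm_cast
      omega
    nlinarith
  have hcount := hτ.card_mul_lt_of_sparse_windows hT.1 (Nat.sub_le _ _)
    (Fintype.card_pos_iff.2 ⟨p.1⟩)
    (fun s hs => exists_injOn_card_backEdgesOn_window_lt τ hsparse hs) hL (filter_subset _ _)
    (fun p hp => (mem_filter.1 hp).2)
  have hpos : 0 < (h : ℝ) - c * N / 4 := by nlinarith
  nlinarith [two_mul_one_sub_mul_sq_le hc0 hc hcN hh.1 hh.2, mul_lt_mul_of_pos_right hshort hpos]

end MedianOrder

theorem statement_17_general (V : Type) [Fintype V] (E : V → V → Prop) (hT : IsTournament E)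
    (ε c : ℝ) (hε0 : 0 < ε) (hc0 : 0 < c) (hc : c < 1 / 3)
    (hI : IsIntransitive E ε) :
    (∀ τ : V ≃ Fin (Fintype.card V), IsMedianOrder E τ →
      ∃ Eτ : Finset (V × V),
        (∀ e ∈ Eτ, E e.1 e.2 ∧ τ e.2 < τ e.1) ∧
        c * ε * (Fintype.card V : ℝ) ^ 2 / 4 ≤ (Eτ.card : ℝ) ∧
        ∀ e ∈ Eτ, c * (Fintype.card V : ℝ) / 4 ≤
          ((τ e.1 : ℕ) : ℝ) - ((τ e.2 : ℕ) : ℝ)) ∨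
    (∃ W : Finset V, (Fintype.card V : ℝ) / 2 ≤ (W.card : ℝ) ∧
      IsIntransitive (fun u v : ↥W => E ↑u ↑v) (2 * (1 - c) * ε)) := by
  refine or_iff_not_imp_right.2 fun hsparse τ hτ => ?_
  set len : V × V → ℝ := fun p => ((τ p.1 : ℕ) : ℝ) - (τ p.2 : ℕ)
  refine ⟨(backEdgesOn E τ univ).filter fun p => c * Fintype.card V / 4 ≤ len p,
    fun p hp => (mem_backEdgesOn.1 (mem_filter.1 hp).1).2.2, ?_, fun p hp => (mem_filter.1 hp).2⟩
  have hsplit := card_filter_add_card_filter_not (s := backEdgesOn E τ univ)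
    fun p => c * Fintype.card V / 4 ≤ len p
  simp only [not_le] at hsplit
  have hback := hI τ
  rw [backCount_eq_card_backEdgesOn, ← hsplit] at hback
  push_cast at hback
  linarith [hτ.card_short_backEdgesOn_le hT hε0 hc0 hc hsparse]

/-- density-increment dichotomy for `ε`-intransitive tournaments. -/
theorem statement_17 (V : Type) [Fintype V] (E : V → V → Prop) (hT : IsTournament E)
    (ε c : ℝ) (hε0 : 0 < ε) (hε : ε ≤ 1 / 4) (hc0 : 0 < c) (hc : c < 1 / 3)
    (hI : IsIntransitive E ε) :
    (∀ τ : V ≃ Fin (Fintype.card V), IsMedianOrder E τ →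
      ∃ Eτ : Finset (V × V),
        (∀ e ∈ Eτ, E e.1 e.2 ∧ τ e.2 < τ e.1) ∧
        c * ε * (Fintype.card V : ℝ) ^ 2 / 4 ≤ (Eτ.card : ℝ) ∧
        ∀ e ∈ Eτ, c * (Fintype.card V : ℝ) / 4 ≤
          ((τ e.1 : ℕ) : ℝ) - ((τ e.2 : ℕ) : ℝ)) ∨
    (∃ W : Finset V, (Fintype.card V : ℝ) / 2 ≤ (W.card : ℝ) ∧
      IsIntransitive (fun u v : ↥W => E ↑u ↑v) (2 * (1 - c) * ε)) :=
  statement_17_general V E hT ε c hε0 hc0 hc hI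
end

section
/- Let k be a positive integer divisible by 10, let τ be a linear ordering of the vertex set of a tournament R, and call an edge u → v of R backward if v precedes u in τ. If R contains the k-th power of a directed cycle of length at least k, then there exist disjoint vertex sets U and W, each of size k/10, such that every edge between U and W is a backward edge directed from U to W (i.e., the backward edges of R with respect to τ contain a complete bipartite graph K_{k/10,k/10} directed from U to W). -/
open Finset

attribute [local instance] Classical.propDecidable

/-!
Read the cycle periodically as `f : ℕ → V` and call a vertex late if its `τ`-position is at least
a threshold `θ` chosen so that exactly `⌊m/2⌋` cycle vertices are early. Cut `ℕ` into blocks of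
`5t` consecutive indices, `k = 10t`. Over `m` consecutive blocks the late and early indices number
`5t⌈m/2⌉` and `5t⌊m/2⌋`, so some block has `t` late indices and some later block has `t` early
ones; since every block has `t` indices of one kind, two adjacent blocks do the same. Indices in
adjacent blocks differ by less than `k`, so the cycle power directs every edge from the first block
to the second, and these edges go from late to early vertices, i.e. backward.
-/

open Function

namespace Nat

theorem exists_eq_of_le_of_le_of_forall_succ_le {g : ℕ → ℕ} (hg : ∀ n, g (n + 1) ≤ g n + 1)
    {k N : ℕ} (h0 : g 0 ≤ k) (hN : k ≤ g N) : ∃ n, g n = k := by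
  induction N with
  | zero => exact ⟨0, le_antisymm h0 hN⟩
  | succ N ih =>
    by_cases hk : k ≤ g N
    · exact ih hk
    · exact ⟨N + 1, by have := hg N; omega⟩

theorem exists_and_succ_of_forall_or {P Q : ℕ → Prop} (hPQ : ∀ n, P n ∨ Q n) {a b : ℕ}
    (hab : a < b) (ha : P a) (hb : Q b) : ∃ n, P n ∧ Q (n + 1) := by
  induction b, hab using Nat.le_induction with
  | base => exact ⟨a, ha, hb⟩
  | succ b _ ih =>
    rcases hPQ b with hP | hQ
    · exact ⟨b, hP, hb⟩
    · exact ih hQ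

theorem count_add_count_not (p : ℕ → Prop) [DecidablePred p] (n : ℕ) :
    count p n + count (fun j => ¬ p j) n = n := by
  rw [count_eq_card_filter_range, count_eq_card_filter_range, card_filter_add_card_filter_not,
    card_range]

theorem sum_count_shift_mul (p : ℕ → Prop) [DecidablePred p] (L a : ℕ) :
    ∑ n ∈ range a, count (fun k => p (L * n + k)) L = count p (L * a) := by
  induction a with
  | zero => simp
  | succ a ih => rw [sum_range_succ, ih, mul_add_one, count_add]

variable {p : ℕ → Prop} [DecidablePred p]

theorem _root_.Function.Periodic.count_mul {m : ℕ} (hp : Periodic p m) (L : ℕ) :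
    count p (m * L) = L * count p m := by
  rw [← sum_count_shift_mul, sum_congr rfl fun n _ => ?_, sum_const, card_range, smul_eq_mul]
  congr 1
  funext k
  rw [add_comm, mul_comm, ← smul_eq_mul, hp.nsmul]

theorem exists_lt_le_count_shift {m L t : ℕ} (hm : 0 < m) (hp : Periodic p m)
    (h : m * t ≤ L * count p m) : ∃ n < m, t ≤ count (fun k => p (L * n + k)) L := by
  by_contra! hlt
  have : L * count p m < m * t :=
    calc L * count p m = ∑ n ∈ range m, count (fun k => p (L * n + k)) L := by
          rw [← hp.count_mul, mul_comm, sum_count_shift_mul]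
      _ < ∑ _n ∈ range m, t :=
          sum_lt_sum_of_nonempty (nonempty_range_iff.2 hm.ne') fun n hn => hlt n (mem_range.1 hn)
      _ = m * t := by rw [sum_const, card_range, smul_eq_mul]
  omega

theorem exists_le_count_shift_and_le_count_shift_not {m L t : ℕ} (hm : 0 < m)
    (hp : Periodic p m) (hL : 2 * t ≤ L + 1) (hpos : m * t ≤ L * count p m)
    (hneg : m * t ≤ L * count (fun j => ¬ p j) m) :
    ∃ n, t ≤ count (fun k => p (L * n + k)) L ∧
      t ≤ count (fun k => ¬ p (L * (n + 1) + k)) L := by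
  obtain ⟨a, ha, hPa⟩ := exists_lt_le_count_shift hm hp hpos
  obtain ⟨b, -, hQb⟩ := exists_lt_le_count_shift (p := fun j => ¬ p j) hm
    (fun j => congrArg Not (hp j)) hneg
  have hQ : t ≤ count (fun k => ¬ p (L * (b + m) + k)) L := by
    convert hQb using 4 with k
    rw [mul_add, add_right_comm, ← smul_eq_mul L m, hp.nsmul]
  refine exists_and_succ_of_forall_or (P := fun n => t ≤ count (fun k => p (L * n + k)) L)
    (Q := fun n => t ≤ count (fun k => ¬ p (L * n + k)) L) (fun n => ?_) (by omega : a < b + m)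
    hPa hQ
  have := count_add_count_not (fun k => p (L * n + k)) L
  omega

end Nat

section Cycle

variable {V : Type} {m : ℕ}

def cycleVertex (x : Fin m → V) (hm : 0 < m) (j : ℕ) : V := x ⟨j % m, Nat.mod_lt _ hm⟩

theorem periodic_cycleVertex (x : Fin m → V) (hm : 0 < m) : Periodic (cycleVertex x hm) m :=
  fun j => by simp only [cycleVertex, Nat.add_mod_right]

theorem Function.Injective.injOn_cycleVertex {x : Fin m → V} (hx : Injective x) (hm : 0 < m)
    (a : ℕ) : Set.InjOn (fun i => cycleVertex x hm (a + i)) (Set.Iio m) := by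
  intro i hi j hj hij
  have hmod : a + i ≡ a + j [MOD m] := congrArg Fin.val (hx hij)
  simpa [Nat.ModEq, Nat.mod_eq_of_lt hi, Nat.mod_eq_of_lt hj] using
    Nat.ModEq.add_left_cancel' a hmod

theorem IsCyclePower.rel_cycleVertex {E : V → V → Prop} {k : ℕ} {x : Fin m → V}
    (hx : IsCyclePower E k m x) (hm : 0 < m) {i j : ℕ} (hij : i < j) (hjk : j ≤ i + k) :
    E (cycleVertex x hm i) (cycleVertex x hm j) := by
  have hj : cycleVertex x hm j = x ⟨(i % m + (j - i)) % m, Nat.mod_lt _ hm⟩ := by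
    simp only [cycleVertex, Nat.mod_add_mod, Nat.add_sub_cancel' hij.le]
  exact hj ▸ hx.2 ⟨i % m, Nat.mod_lt _ hm⟩ (j - i) (by omega) (by omega)

end Cycle

theorem Finset.exists_card_filter_lt_eq {α : Type*} (s : Finset α) {g : α → ℕ}
    (hg : Set.InjOn g s) {k : ℕ} (hk : k ≤ #s) : ∃ θ, #{a ∈ s | g a < θ} = k := by
  refine Nat.exists_eq_of_le_of_le_of_forall_succ_le (g := fun θ => #{a ∈ s | g a < θ})
    (N := s.sup g + 1) (fun θ => ?_) (by simp) ?_
  · have hle : #{a ∈ s | g a = θ} ≤ 1 :=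
      card_le_one.2 fun a ha b hb => hg (mem_filter.1 ha).1 (mem_filter.1 hb).1
        ((mem_filter.1 ha).2.trans (mem_filter.1 hb).2.symm)
    calc #{a ∈ s | g a < θ + 1} ≤ #({a ∈ s | g a < θ} ∪ {a ∈ s | g a = θ}) := by
          refine card_le_card fun a ha => ?_
          obtain ⟨has, hlt⟩ := mem_filter.1 ha
          rcases Nat.lt_succ_iff_lt_or_eq.1 hlt with h | h
          exacts [mem_union_left _ (mem_filter.2 ⟨has, h⟩),
            mem_union_right _ (mem_filter.2 ⟨has, h⟩)]
      _ ≤ #{a ∈ s | g a < θ} + 1 := (card_union_le _ _).trans (by omega)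
  · rwa [filter_true_of_mem fun a ha => Nat.lt_succ_of_le (le_sup ha)]

theorem exists_biclique_of_injOn {V ι κ : Type*} {R : V → V → Prop} (hR : ∀ v, ¬ R v v)
    {f : ι → V} {g : κ → V} {A : Finset ι} {B : Finset κ} (hf : Set.InjOn f A)
    (hg : Set.InjOn g B) {t : ℕ} (hA : t ≤ #A) (hB : t ≤ #B)
    (hAB : ∀ i ∈ A, ∀ j ∈ B, R (f i) (g j)) :
    ∃ U W : Finset V, Disjoint U W ∧ #U = t ∧ #W = t ∧ ∀ u ∈ U, ∀ w ∈ W, R u w := by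
  classical
  obtain ⟨U, hUA, hU⟩ := exists_subset_card_eq (hA.trans_eq (card_image_of_injOn hf).symm)
  obtain ⟨W, hWB, hW⟩ := exists_subset_card_eq (hB.trans_eq (card_image_of_injOn hg).symm)
  have hUW : ∀ u ∈ U, ∀ w ∈ W, R u w := by
    intro u hu w hw
    obtain ⟨i, hi, rfl⟩ := mem_image.1 (hUA hu)
    obtain ⟨j, hj, rfl⟩ := mem_image.1 (hWB hw)
    exact hAB i hi j hj
  exact ⟨U, W, disjoint_left.2 fun v hvU hvW => hR v (hUW v hvU v hvW), hU, hW, hUW⟩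

theorem statement_19_general (k : ℕ) (hk : 0 < k) (hdvd : 10 ∣ k)
    (V : Type) [Fintype V] (E : V → V → Prop)
    (τ : V ≃ Fin (Fintype.card V))
    (m : ℕ) (hm : k ≤ m) (x : Fin m → V) (hx : IsCyclePower E k m x) :
    ∃ U W : Finset V, Disjoint U W ∧ U.card = k / 10 ∧ W.card = k / 10 ∧
      ∀ u ∈ U, ∀ w ∈ W, E u w ∧ τ w < τ u := by
  obtain ⟨t, rfl⟩ := hdvd
  have hm0 : 0 < m := by omega
  set f := cycleVertex x hm0
  have hinj (a : ℕ) : Set.InjOn (fun i => f (a + i)) (Set.Iio m) :=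
    hx.1.injOn_cycleVertex hm0 a
  obtain ⟨θ, hθ⟩ := exists_card_filter_lt_eq (range m) (g := fun j => (τ (f j) : ℕ))
    (by simpa only [coe_range, zero_add, comp_def] using
      (Fin.val_injective.comp τ.injective).comp_injOn (hinj 0))
    ((card_range m).symm ▸ Nat.div_le_self m 2)
  set p : ℕ → Prop := fun j => θ ≤ τ (f j)
  have hp : Periodic p m := fun j => by simp only [p, f, periodic_cycleVertex x hm0 j]
  have hearly : Nat.count (fun j => ¬ p j) m = m / 2 := by
    simpa only [Nat.count_eq_card_filter_range, p, not_le, card_range] using hθ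
  have hlate : Nat.count p m = m - m / 2 := by have := Nat.count_add_count_not p m; omega
  obtain ⟨n, hP, hQ⟩ :=
    Nat.exists_le_count_shift_and_le_count_shift_not (L := 5 * t) (t := t) hm0 hp (by omega)
    (hlate ▸ (Nat.mul_le_mul_right t (by omega : m ≤ 5 * (m - m / 2))).trans_eq (by ring))
    (hearly ▸ (Nat.mul_le_mul_right t (by omega : m ≤ 5 * (m / 2))).trans_eq (by ring))
  rw [Nat.count_eq_card_filter_range] at hP hQ
  have hsub {q : ℕ → Prop} [DecidablePred q] :
      (↑({i ∈ range (5 * t) | q i}) : Set ℕ) ⊆ Set.Iio m :=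
    (coe_subset.2 (filter_subset _ _)).trans
      (by rw [coe_range]; exact Set.Iio_subset_Iio (by omega))
  obtain ⟨U, W, hUW, hU, hW, hbackward⟩ := exists_biclique_of_injOn
    (R := fun u w => E u w ∧ τ w < τ u) (fun v h => lt_irrefl _ h.2)
    ((hinj _).mono hsub) ((hinj _).mono hsub) hP hQ fun i hi j hj => by
      simp only [mem_filter, mem_range, p, not_le] at hi hj
      have := mul_add_one (5 * t) n
      exact ⟨hx.rel_cycleVertex hm0 (by linarith) (by linarith), hj.2.trans_le hi.2⟩
  exact ⟨U, W, hUW, by omega, by omega, hbackward⟩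

/-- if a tournament contains the `k`-th power of a cycle of length at
least `k`, then for any vertex ordering the backward edges contain a complete
bipartite `K_{k/10,k/10}` directed from `U` to `W`. -/
theorem statement_19 (k : ℕ) (hk : 0 < k) (hdvd : 10 ∣ k)
    (V : Type) [Fintype V] (E : V → V → Prop) (hT : IsTournament E)
    (τ : V ≃ Fin (Fintype.card V))
    (m : ℕ) (hm : k ≤ m) (x : Fin m → V) (hx : IsCyclePower E k m x) :
    ∃ U W : Finset V, Disjoint U W ∧ U.card = k / 10 ∧ W.card = k / 10 ∧
      ∀ u ∈ U, ∀ w ∈ W, E u w ∧ τ w < τ u :=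
  statement_19_general k hk hdvd V E τ m hm x hx
end
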